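/- arXiv:2210.00302 — 14 statements merged into one kernel-verified Lean document; each statement's English description precedes it below -/
import Mathlib

section
/- Let C be a category that is idempotent complete (every idempotent splits) and in which every hom-set X ⟶ Y is finite. Then every endomorphism has eventual image duality: for every object X of C and every endomorphism f : X ⟶ X, the diagram F_f : ℤ ⥤ C has a limit and a colimit, and the canonical comparison map from the limit to the colimit (the composite of the limit projection at index 0 with the colimit coprojection at index 0) is an isomorphism. -/
/-!
Since `End X` is finite, some power `e = f ^ n` with `n ≠ 0` is idempotent; split it as
`e = r ≫ i` with `i ≫ r = 𝟙 Y`. Then `f` induces `g = i ≫ f ≫ r` on `Y` with `g ^ n = 𝟙`, so `g`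
is an automorphism. Every leg `p m` of a cone over `F_f` satisfies `p m = p (m - n) ≫ e`, so it
factors through `Y`, where the relation `p (m + 1) = p m ≫ f` becomes multiplication by `g`; hence
the legs `g ^ m ≫ i` make `Y` the limit, and dually the legs `r ≫ g ^ (-m)` make it the colimit.
The comparison map at `0` is then `i ≫ r = 𝟙 Y`.
-/

open CategoryTheory CategoryTheory.Limits

/-- The diagram `ℤ ⥤ C` associated to an endomorphism `f : X ⟶ X`: every object is `X`
and the map `n ⟶ m` (for `n ≤ m`) is the `(m - n)`-fold composite of `f`. -/
def endoDiagram {C : Type*} [Category C] {X : C} (f : X ⟶ X) : ℤ ⥤ C where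
  obj _ := X
  map {n m} _ := (show CategoryTheory.End X from f) ^ (m - n).toNat
  map_id n := by
    simp only [sub_self, Int.toNat_zero, pow_zero]
    rfl
  map_comp {n m p} h₁ h₂ := by
    have hnm : n ≤ m := leOfHom h₁
    have hmp : m ≤ p := leOfHom h₂
    show (show CategoryTheory.End X from f) ^ (p - n).toNat =
      (show CategoryTheory.End X from f) ^ (p - m).toNat *
        (show CategoryTheory.End X from f) ^ (m - n).toNat
    rw [← pow_add]
    congr 1
    omega

lemma exists_pow_ne_zero_isIdempotentElem {M : Type*} [Monoid M] [Finite M] (a : M) :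
    ∃ n ≠ 0, IsIdempotentElem (a ^ n) := by
  obtain ⟨x, y, hne, hxy⟩ := Finite.exists_ne_map_eq_of_infinite (a ^ · : ℕ → M)
  wlog hlt : x < y generalizing x y
  · exact this y x hne.symm hxy.symm (by omega)
  obtain ⟨p, rfl⟩ := Nat.exists_eq_add_of_lt hlt
  have hfix (t : ℕ) : a ^ x * (a ^ (p + 1)) ^ t = a ^ x := by
    induction t with
    | zero => rw [pow_zero, mul_one]
    | succ t ih => rw [pow_succ, ← mul_assoc, ih, ← pow_add, ← add_assoc, ← hxy]
  -- `N` is a multiple of the period `p + 1` lying beyond the preperiod `x`.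
  have hxN : x ≤ (p + 1) * (x + 1) := by nlinarith
  set N := (p + 1) * (x + 1)
  refine ⟨N, by positivity, ?_⟩
  calc a ^ N * a ^ N = a ^ (N - x) * (a ^ x * (a ^ (p + 1)) ^ (x + 1)) := by
        rw [← pow_mul, ← mul_assoc, pow_sub_mul_pow a hxN]
    _ = a ^ N := by rw [hfix, pow_sub_mul_pow a hxN]

namespace CategoryTheory

variable {C : Type*} [Category C]

lemma End.pow_comp_eq_comp_pow_of_comp_eq {X Y : C} {f : X ⟶ X} {g : Y ⟶ Y} {a : X ⟶ Y}
    (h : f ≫ a = a ≫ g) (k : ℕ) : (End.of f ^ k) ≫ a = a ≫ End.of g ^ k := by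
  induction k with
  | zero => simp
  | succ k ih =>
    rw [pow_succ, pow_succ, End.mul_def, End.mul_def, Category.assoc, ih, ← Category.assoc,
      End.of, h, Category.assoc]

namespace endoDiagram

variable {X A : C} {f : X ⟶ X}

lemma map_eq {m m' : ℤ} (h : m ⟶ m') : (endoDiagram f).map h = End.of f ^ (m' - m).toNat := rfl

lemma cone_π_app_comp (s : Cone (endoDiagram f)) (m : ℤ) :
    s.π.app m ≫ f = s.π.app (m + 1) := by
  have := s.w (homOfLE (by omega : m ≤ m + 1))
  rwa [map_eq, add_sub_cancel_left, Int.toNat_one, pow_one] at this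

lemma comp_cocone_ι_app (s : Cocone (endoDiagram f)) (m : ℤ) :
    f ≫ s.ι.app (m + 1) = s.ι.app m := by
  have := s.w (homOfLE (by omega : m ≤ m + 1))
  rwa [map_eq, add_sub_cancel_left, Int.toNat_one, pow_one] at this

lemma comp_pow_of_comp_eq (p : ℤ → (A ⟶ X)) (hp : ∀ m, p m ≫ f = p (m + 1)) (m : ℤ) (k : ℕ) :
    p m ≫ End.of f ^ k = p (m + k) := by
  induction k with
  | zero => simp
  | succ k ih =>
    rw [pow_succ', End.mul_def, ← Category.assoc, ih, End.of, hp]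
    push_cast
    rw [add_assoc]

lemma pow_comp_of_comp_eq (p : ℤ → (X ⟶ A)) (hp : ∀ m, f ≫ p (m + 1) = p m) (m : ℤ) (k : ℕ) :
    (End.of f ^ k) ≫ p (m + k) = p m := by
  induction k with
  | zero => simp
  | succ k ih =>
    rw [pow_succ', End.mul_def, Category.assoc, Nat.cast_succ, ← add_assoc, hp, ih]

def coneOfComp (p : ℤ → (A ⟶ X)) (hp : ∀ m, p m ≫ f = p (m + 1)) : Cone (endoDiagram f) where
  pt := A
  π.app := p
  π.naturality m m' h := by
    obtain ⟨k, rfl⟩ := Int.le.dest (leOfHom h)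
    change 𝟙 A ≫ p (m + k) = p m ≫ End.of f ^ (m + k - m).toNat
    rw [Category.id_comp, add_sub_cancel_left, Int.toNat_natCast, comp_pow_of_comp_eq p hp]

def coconeOfComp (p : ℤ → (X ⟶ A)) (hp : ∀ m, f ≫ p (m + 1) = p m) :
    Cocone (endoDiagram f) where
  pt := A
  ι.app := p
  ι.naturality m m' h := by
    obtain ⟨k, rfl⟩ := Int.le.dest (leOfHom h)
    change (End.of f ^ (m + k - m).toNat) ≫ p (m + k) = p m ≫ 𝟙 A
    rw [Category.comp_id, add_sub_cancel_left, Int.toNat_natCast, pow_comp_of_comp_eq p hp]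

end endoDiagram

lemma Limits.isIso_limit_π_comp_colimit_ι {J : Type*} [Category J] {F : J ⥤ C} [HasLimit F]
    [HasColimit F] {c : Cone F} (hc : IsLimit c) {d : Cocone F} (hd : IsColimit d) (j : J)
    [IsIso (c.π.app j ≫ d.ι.app j)] : IsIso (limit.π F j ≫ colimit.ι F j) := by
  rw [← limit.isoLimitCone_hom_π ⟨c, hc⟩, ← colimit.isoColimitCocone_ι_inv ⟨d, hd⟩,
    Category.assoc, ← Category.assoc (c.π.app j)]
  infer_instance

/-- A splitting of an (idempotent) power `f ^ n`, `n ≠ 0`; its object `Y` is the eventual image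
of `f`. -/
structure EventualImage {X : C} (f : X ⟶ X) where
  n : ℕ
  n_ne_zero : n ≠ 0
  Y : C
  i : Y ⟶ X
  r : X ⟶ Y
  i_r : i ≫ r = 𝟙 Y
  r_i : r ≫ i = End.of f ^ n

lemma EventualImage.nonempty [IsIdempotentComplete C] {X : C} [Finite (End X)] (f : X ⟶ X) :
    Nonempty (EventualImage f) := by
  obtain ⟨n, hn, hidem⟩ := exists_pow_ne_zero_isIdempotentElem (End.of f)
  obtain ⟨Y, i, r, hir, hri⟩ := IsIdempotentComplete.idempotents_split X _ hidem
  exact ⟨⟨n, hn, Y, i, r, hir, hri⟩⟩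

namespace EventualImage

variable {X : C} {f : X ⟶ X} (E : EventualImage f)

lemma pow_n_comp_r : (End.of f ^ E.n) ≫ E.r = E.r := by
  rw [← E.r_i, Category.assoc, E.i_r, Category.comp_id]

lemma i_comp_pow_n : E.i ≫ End.of f ^ E.n = E.i := by
  rw [← E.r_i, ← Category.assoc, E.i_r, Category.id_comp]

lemma eq_comp_r_of_comp_i_eq {B : C} {w : B ⟶ E.Y} {t : B ⟶ X} (h : w ≫ E.i = t) :
    w = t ≫ E.r := by
  rw [← h, Category.assoc, E.i_r, Category.comp_id]

lemma eq_i_comp_of_r_comp_eq {B : C} {w : E.Y ⟶ B} {t : X ⟶ B} (h : E.r ≫ w = t) :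
    w = E.i ≫ t := by
  rw [← h, reassoc_of% E.i_r]

def restriction : E.Y ⟶ E.Y := E.i ≫ f ≫ E.r

lemma r_comp_restriction : E.r ≫ E.restriction = f ≫ E.r := by
  have hcomm : (End.of f ^ E.n) ≫ f = f ≫ End.of f ^ E.n := (pow_mul_comm' (End.of f) E.n).symm
  rw [restriction, reassoc_of% E.r_i, reassoc_of% hcomm, E.pow_n_comp_r]

lemma restriction_comp_i : E.restriction ≫ E.i = E.i ≫ f := by
  have hcomm : (End.of f ^ E.n) ≫ f = f ≫ End.of f ^ E.n := (pow_mul_comm' (End.of f) E.n).symm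
  rw [restriction, Category.assoc, Category.assoc, E.r_i, ← hcomm, ← Category.assoc,
    E.i_comp_pow_n]

lemma restriction_pow_n : End.of E.restriction ^ E.n = 1 := by
  have h : E.r ≫ End.of E.restriction ^ E.n = E.r := by
    rw [← End.pow_comp_eq_comp_pow_of_comp_eq E.r_comp_restriction.symm, E.pow_n_comp_r]
  rw [End.one_def, ← E.i_r, ← h, ← Category.assoc, E.i_r, Category.id_comp]

def restrictionUnit : (End E.Y)ˣ :=
  Units.ofPowEqOne _ E.n E.restriction_pow_n E.n_ne_zero

def zpow (m : ℤ) : E.Y ⟶ E.Y := ((E.restrictionUnit ^ m : (End E.Y)ˣ) : End E.Y)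

lemma zpow_zero : E.zpow 0 = 𝟙 E.Y := rfl

lemma zpow_add (a b : ℤ) : E.zpow (a + b) = E.zpow a ≫ E.zpow b := by
  rw [zpow, add_comm, _root_.zpow_add, Units.val_mul, End.mul_def]
  rfl

lemma zpow_add_one (m : ℤ) : E.zpow (m + 1) = E.zpow m ≫ E.restriction := by
  rw [E.zpow_add]
  simp [zpow, restrictionUnit]

lemma zpow_one_add (m : ℤ) : E.zpow (1 + m) = E.restriction ≫ E.zpow m := by
  rw [E.zpow_add]
  simp [zpow, restrictionUnit]

instance : IsIso E.restriction :=
  (isUnit_iff_isIso _).mp (IsUnit.of_pow_eq_one E.restriction_pow_n E.n_ne_zero)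

def cone : Cone (endoDiagram f) :=
  endoDiagram.coneOfComp (fun m => E.zpow m ≫ E.i) fun m => by
    rw [Category.assoc, ← E.restriction_comp_i, E.zpow_add_one, Category.assoc]

def cocone : Cocone (endoDiagram f) :=
  endoDiagram.coconeOfComp (fun m => E.r ≫ E.zpow (-m)) fun m => by
    rw [← reassoc_of% E.r_comp_restriction, ← E.zpow_one_add, neg_add', add_sub_cancel]

lemma cone_π_app_zero : E.cone.π.app 0 = E.i := Category.id_comp _

lemma cocone_ι_app_zero : E.cocone.ι.app 0 = E.r := Category.comp_id _

variable {A : C}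

lemma eq_comp_zpow_comp_i (p : ℤ → (A ⟶ X)) (hp : ∀ m, p m ≫ f = p (m + 1)) (m : ℤ) :
    p m = (p 0 ≫ E.r) ≫ E.zpow m ≫ E.i := by
  have hretract (m : ℤ) : p m ≫ E.r ≫ E.i = p m := by
    have h := endoDiagram.comp_pow_of_comp_eq p hp (m - E.n) E.n
    rw [sub_add_cancel, ← E.r_i] at h
    rw [← h, Category.assoc, Category.assoc, reassoc_of% E.i_r]
  have hstep (m : ℤ) : p (m + 1) ≫ E.r = (p m ≫ E.r) ≫ E.restriction := by
    rw [Category.assoc, E.r_comp_restriction, ← hp, Category.assoc]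
  have hseq (m : ℤ) : p m ≫ E.r = (p 0 ≫ E.r) ≫ E.zpow m := by
    induction m with
    | zero => rw [E.zpow_zero, Category.comp_id]
    | succ m ih => rw [hstep, ih, E.zpow_add_one, Category.assoc]
    | pred m ih =>
      rw [← cancel_mono E.restriction, ← hstep, Category.assoc, ← E.zpow_add_one, sub_add_cancel,
        ih]
  rw [← hretract m, ← Category.assoc, hseq, Category.assoc]

lemma eq_r_comp_zpow_comp (p : ℤ → (X ⟶ A)) (hp : ∀ m, f ≫ p (m + 1) = p m) (m : ℤ) :
    p m = E.r ≫ E.zpow (-m) ≫ E.i ≫ p 0 := by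
  have hretract (m : ℤ) : E.r ≫ E.i ≫ p m = p m := by
    have h := endoDiagram.pow_comp_of_comp_eq p hp m E.n
    rw [← E.r_i, Category.assoc] at h
    rw [← h, reassoc_of% E.i_r]
  have hstep (m : ℤ) : E.i ≫ p m = E.restriction ≫ E.i ≫ p (m + 1) := by
    rw [reassoc_of% E.restriction_comp_i, hp]
  have hseq (m : ℤ) : E.i ≫ p m = E.zpow (-m) ≫ E.i ≫ p 0 := by
    induction m with
    | zero => rw [neg_zero, E.zpow_zero, Category.id_comp]
    | succ m ih =>
      rw [← cancel_epi E.restriction, ← hstep, ih, ← reassoc_of% E.zpow_one_add, neg_add',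
        add_sub_cancel]
    | pred m ih =>
      rw [hstep, sub_add_cancel, ih, ← reassoc_of% E.zpow_one_add]
      congr 2
      ring
  rw [← hretract m, hseq]

lemma cone_π_app_zero_comp_cocone_ι_app_zero :
    E.cone.π.app 0 ≫ E.cocone.ι.app 0 = 𝟙 E.Y := by
  rw [E.cone_π_app_zero, E.cocone_ι_app_zero]
  exact E.i_r

instance : IsIso (E.cone.π.app 0 ≫ E.cocone.ι.app 0) := by
  rw [E.cone_π_app_zero_comp_cocone_ι_app_zero]
  exact IsIso.id _

def isLimit : IsLimit E.cone where
  lift s := s.π.app 0 ≫ E.r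
  fac s m :=
    (E.eq_comp_zpow_comp_i (fun m => s.π.app m) (endoDiagram.cone_π_app_comp s) m).symm
  uniq s w hw := by
    have h := hw 0
    rw [E.cone_π_app_zero] at h
    exact E.eq_comp_r_of_comp_i_eq h

def isColimit : IsColimit E.cocone where
  desc s := E.i ≫ s.ι.app 0
  fac s m := (Category.assoc _ _ _).trans
    (E.eq_r_comp_zpow_comp (fun m => s.ι.app m) (endoDiagram.comp_cocone_ι_app s) m).symm
  uniq s w hw := by
    have h := hw 0
    rw [E.cocone_ι_app_zero] at h
    exact E.eq_i_comp_of_r_comp_eq h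

end EventualImage

end CategoryTheory

/-- In an idempotent complete category with finite hom-sets, every endomorphism has
eventual image duality: the associated `ℤ`-diagram has a limit and a colimit, and the
canonical comparison map from the limit to the colimit is an isomorphism. -/
theorem eventual_image_duality_of_idempotentComplete_of_finite_homs
    {C : Type*} [Category C] [IsIdempotentComplete C]
    (hfin : ∀ X Y : C, Finite (X ⟶ Y)) (X : C) (f : X ⟶ X) :
    HasLimit (endoDiagram f) ∧ HasColimit (endoDiagram f) ∧
      ∀ (h₁ : HasLimit (endoDiagram f)) (h₂ : HasColimit (endoDiagram f)),
        IsIso (@limit.π ℤ _ C _ (endoDiagram f) h₁ (0 : ℤ) ≫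
          @colimit.ι ℤ _ C _ (endoDiagram f) h₂ (0 : ℤ)) := by
  have : Finite (End X) := hfin X X
  obtain ⟨E⟩ := EventualImage.nonempty f
  exact ⟨HasLimit.mk ⟨_, E.isLimit⟩, HasColimit.mk ⟨_, E.isColimit⟩,
    fun _ _ => isIso_limit_π_comp_colimit_ι E.isLimit E.isColimit 0⟩
end

section
/- Let C be a category, X an object of C, f : X ⟶ X an endomorphism, and F_f : ℤ ⥤ C the associated diagram. Suppose F_f has a limit. Then the endomorphism of the limit of F_f induced (via the functoriality of limits) by the natural transformation F_f ⟶ F_f whose component at every index n is f is an isomorphism. -/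
open CategoryTheory CategoryTheory.Limits

/-- The natural transformation `endoDiagram f ⟶ endoDiagram f` whose component at every
index is `f` itself (naturality holds since `f` commutes with its own powers). -/
def endoNatTrans {C : Type*} [Category C] {X : C} (f : X ⟶ X) :
    endoDiagram f ⟶ endoDiagram f where
  app _ := f
  naturality n m h := by
    show (show CategoryTheory.End X from f) * (show CategoryTheory.End X from f) ^ (m - n).toNat
      = (show CategoryTheory.End X from f) ^ (m - n).toNat * (show CategoryTheory.End X from f)
    rw [← pow_succ, ← pow_succ']

/-!
Translating the legs of a limit cone of `endoDiagram f` by `k ∈ ℤ` gives another cone, hence an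
endomorphism `shiftHom k` of the limit, and `k ↦ shiftHom k` turns addition into composition. The
map induced by `endoNatTrans f` is `shiftHom 1`, because a leg followed by `f` is the next leg;
so it is invertible with inverse `shiftHom (-1)`.
-/

namespace endoDiagram

variable {C : Type*} [Category C] {X : C} {f : X ⟶ X}

lemma map_eq_pow {n m : ℤ} (h : n ⟶ m) :
    (endoDiagram f).map h = (show End X from f) ^ (m - n).toNat :=
  rfl

lemma cone_π_comp (c : Cone (endoDiagram f)) (n : ℤ) : c.π.app n ≫ f = c.π.app (n + 1) := by
  have hw := c.w (homOfLE (show n ≤ n + 1 by omega))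
  rwa [map_eq_pow, add_sub_cancel_left, Int.toNat_one, pow_one] at hw

def shiftCone (c : Cone (endoDiagram f)) (k : ℤ) : Cone (endoDiagram f) where
  pt := c.pt
  π :=
    { app n := (c.π.app (n + k) : c.pt ⟶ X)
      naturality n m h := by
        have hnm : n + k ≤ m + k := by have := leOfHom h; omega
        show 𝟙 c.pt ≫ c.π.app (m + k) =
          c.π.app (n + k) ≫ (show End X from f) ^ (m - n).toNat
        refine (Category.id_comp _).trans ?_
        rw [← c.w (homOfLE hnm), map_eq_pow, add_sub_add_right_eq_sub]
        rfl }

variable {c : Cone (endoDiagram f)} (hc : IsLimit c)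

def shiftHom (k : ℤ) : c.pt ⟶ c.pt :=
  hc.lift (shiftCone c k)

lemma shiftHom_π (k n : ℤ) : shiftHom hc k ≫ c.π.app n = c.π.app (n + k) :=
  hc.fac _ n

lemma shiftHom_zero : shiftHom hc 0 = 𝟙 c.pt :=
  hc.hom_ext fun n => by rw [shiftHom_π, add_zero, Category.id_comp]

lemma shiftHom_comp (j k : ℤ) : shiftHom hc j ≫ shiftHom hc k = shiftHom hc (j + k) :=
  hc.hom_ext fun n => by
    rw [Category.assoc, shiftHom_π, shiftHom_π]
    exact (shiftHom_π hc j (n + k)).trans (by rw [add_assoc, add_comm k j])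

def shiftIso (k : ℤ) : c.pt ≅ c.pt where
  hom := shiftHom hc k
  inv := shiftHom hc (-k)
  hom_inv_id := by rw [shiftHom_comp, add_neg_cancel, shiftHom_zero]
  inv_hom_id := by rw [shiftHom_comp, neg_add_cancel, shiftHom_zero]

lemma limMap_endoNatTrans_eq_shiftHom [HasLimit (endoDiagram f)] :
    limMap (endoNatTrans f) = shiftHom (limit.isLimit (endoDiagram f)) 1 :=
  limit.hom_ext fun n =>
    (limMap_π _ n).trans <|
      (cone_π_comp (limit.cone (endoDiagram f)) n).trans (shiftHom_π _ 1 n).symm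

end endoDiagram

/-- If the diagram of an endomorphism `f : X ⟶ X` has a limit, then the endomorphism of
the limit induced by the natural transformation with all components `f` is an
isomorphism. -/
theorem isIso_limMap_endoNatTrans {C : Type*} [Category C] {X : C} (f : X ⟶ X)
    [HasLimit (endoDiagram f)] :
    IsIso (limMap (endoNatTrans f)) := by
  rw [endoDiagram.limMap_endoNatTrans_eq_shiftHom]
  exact (endoDiagram.shiftIso (limit.isLimit (endoDiagram f)) 1).isIso_hom
end

section
/- Let X be a finite set and f : X → X a function, and let N = (card X)!, the factorial of the cardinality of X. Then the N-th iterate f^[N] is idempotent under composition (f^[N] ∘ f^[N] = f^[N]), and it is the unique idempotent iterate: for every m ≥ 1, if f^[m] ∘ f^[m] = f^[m] then f^[m] = f^[N]. -/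
/-!
Along the orbit of `x` two of the first `card X + 1` points coincide, so from step `card X` on the
orbit lies on a cycle, whose length is at most `card X` and hence divides `(card X)!`. Thus
`f^[(card X)!]` fixes every point of its image. Uniqueness holds for any `f`: if `f^[m]` and `f^[n]`
are both idempotent, then `f^[m] = f^[n * m] = f^[m * n] = f^[n]`.
-/

open Function Fintype

namespace Function

variable {α : Type*} (f : α → α)

theorem iterate_mem_periodicPts_of_card_le [Fintype α] {n : ℕ} (hn : card α ≤ n) (x : α) :
    f^[n] x ∈ periodicPts f := by
  obtain ⟨i, j, hij, heq⟩ :=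
    exists_ne_map_eq_of_card_lt (fun i : Fin (card α + 1) => f^[i] x) (by simp)
  wlog hlt : i < j generalizing i j
  · exact this j i hij.symm heq.symm (lt_of_le_of_ne (not_lt.mp hlt) hij.symm)
  have hper : IsPeriodicPt f (j - i) (f^[i] x) := by
    rw [IsPeriodicPt, IsFixedPt, ← iterate_add_apply, Nat.sub_add_cancel hlt.le]
    exact heq.symm
  rw [show n = (n - i) + i by omega, iterate_add_apply]
  exact mk_mem_periodicPts (Nat.sub_pos_of_lt hlt) (hper.apply_iterate _)

theorem iterate_factorial_card_comp_self [Fintype α] :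
    f^[(card α).factorial] ∘ f^[(card α).factorial] = f^[(card α).factorial] :=
  funext fun x => isPeriodicPt_factorial_card_of_mem_periodicPts
    (iterate_mem_periodicPts_of_card_le f (Nat.self_le_factorial _) x)

variable {f}

theorem iterate_mul_eq_of_comp_self {m : ℕ} (h : f^[m] ∘ f^[m] = f^[m])
    {k : ℕ} (hk : 1 ≤ k) : f^[k * m] = f^[m] := by
  induction k, hk using Nat.le_induction with
  | base => rw [one_mul]
  | succ k _ ih => rw [add_one_mul, iterate_add, ih, h]

theorem iterate_eq_of_comp_self {m n : ℕ} (hm : 1 ≤ m) (hn : 1 ≤ n)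
    (hfm : f^[m] ∘ f^[m] = f^[m]) (hfn : f^[n] ∘ f^[n] = f^[n]) : f^[m] = f^[n] := by
  rw [← iterate_mul_eq_of_comp_self hfm hn, mul_comm, iterate_mul_eq_of_comp_self hfn hm]

end Function

/-- For a function `f` on a finite set `X`, the `(card X)!`-th iterate of `f` is
idempotent, and it is the unique idempotent iterate of `f` with positive exponent. -/
theorem iterate_factorial_idempotent (X : Type*) [Fintype X] (f : X → X) :
    (f^[(Fintype.card X).factorial] ∘ f^[(Fintype.card X).factorial]
        = f^[(Fintype.card X).factorial]) ∧
      ∀ m : ℕ, 1 ≤ m → f^[m] ∘ f^[m] = f^[m] → f^[m] = f^[(Fintype.card X).factorial] :=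
  ⟨iterate_factorial_card_comp_self f, fun _ hm hidem =>
    iterate_eq_of_comp_self hm (Nat.factorial_pos _) hidem (iterate_factorial_card_comp_self f)⟩
end

section
/- Let X be a finite set, f : X → X a function, and x ∈ X. Then for every n ≥ card X: (i) f^[n](x) belongs to the eventual image ⋂_{k ∈ ℕ} range(f^[k]); and (ii) f^[n](f^[(card X)!](x)) = f^[n](x). -/
/-- Back-and-forth description of the idempotent `f^∞` for a function `f` on a finite
set: for `n ≥ card X`, the point `f^[n] x` lies in the eventual image
`⋂ k, range f^[k]`, and `f^[n] (f^[(card X)!] x) = f^[n] x`. -/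
theorem iterate_mem_eventualImage (X : Type*) [Fintype X] (f : X → X) (x : X)
    (n : ℕ) (hn : Fintype.card X ≤ n) :
    f^[n] x ∈ ⋂ k : ℕ, Set.range f^[k] ∧
      f^[n] (f^[(Fintype.card X).factorial] x) = f^[n] x := by
  set N := Fintype.card X with hN
  set L := N.factorial with hL
  -- pigeonhole: two equal iterates among the first N+1
  obtain ⟨a, b, hab, hbN, hfe⟩ :
      ∃ a b : ℕ, a < b ∧ b ≤ N ∧ f^[a] x = f^[b] x := by
    have hninj : ¬ Function.Injective (fun m : Fin (N + 1) => f^[m] x) := by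
      intro h
      have := Fintype.card_le_of_injective _ h
      simp [hN] at this
    simp only [Function.Injective, not_forall] at hninj
    obtain ⟨i, j, hij, hne⟩ := hninj
    rcases lt_or_gt_of_ne (fun h : (i:ℕ) = j => hne (Fin.ext h)) with h | h
    · exact ⟨i, j, h, Nat.lt_succ_iff.mp j.isLt, hij⟩
    · exact ⟨j, i, h, Nat.lt_succ_iff.mp i.isLt, hij.symm⟩
  set p := b - a with hp
  have hppos : 0 < p := Nat.sub_pos_of_lt hab
  have hstep : ∀ m, a ≤ m → f^[m + p] x = f^[m] x := by
    intro m hm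
    have h1 : m + p = (m - a) + b := by omega
    have h2 : m = (m - a) + a := by omega
    rw [h1, Function.iterate_add_apply, ← hfe, ← Function.iterate_add_apply, ← h2]
  have hmul : ∀ c m, a ≤ m → f^[m + c * p] x = f^[m] x := by
    intro c
    induction c with
    | zero => simp
    | succ c ih =>
        intro m hm
        have h1 : m + (c + 1) * p = (m + p) + c * p := by ring
        rw [h1, ih (m + p) (le_trans hm (Nat.le_add_right _ _)), hstep m hm]
  have hdvd : p ∣ L := Nat.dvd_factorial hppos (by omega)
  have hmulL : ∀ c m, a ≤ m → f^[m + c * L] x = f^[m] x := by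
    intro c m hm
    obtain ⟨d, hd⟩ := hdvd
    have : m + c * L = m + (c * d) * p := by rw [hd]; ring
    rw [this]; exact hmul (c * d) m hm
  have han : a ≤ n := le_trans (le_trans hab.le hbN) hn
  have hLpos : 1 ≤ L := Nat.factorial_pos N
  constructor
  · rw [Set.mem_iInter]
    intro k
    refine ⟨f^[n + k * L - k] x, ?_⟩
    have hk : k ≤ n + k * L := le_trans (Nat.le_mul_of_pos_right k hLpos)
      (Nat.le_add_left _ _)
    rw [← Function.iterate_add_apply]
    have : k + (n + k * L - k) = n + k * L := by omega
    rw [this, hmulL k n han]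
  · rw [← Function.iterate_add_apply]
    have := hmulL 1 n han
    rwa [one_mul] at this
end

section
/- (Fitting's lemma.) Let k be a field, V a finite-dimensional k-vector space, and f : V →ₗ[k] V a linear endomorphism. Let E = ⨅_{n ∈ ℕ} range(f^n) be the eventual image and K = ⨆_{n ∈ ℕ} ker(f^n) the eventual kernel. Then: (i) E and K are complementary submodules of V (IsCompl E K); (ii) f restricts to a bijection of E onto itself (Set.BijOn f E E); (iii) f is nilpotent on K: there exists m such that f^m(x) = 0 for all x ∈ K; and (iv) this decomposition is unique: if E', K' are complementary f-invariant submodules such that f restricts to a bijection of E' onto itself and f is nilpotent on K', then E' = E and K' = K. -/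
/-!
Since `V` is both Artinian and Noetherian, the chains `range (f ^ n)` and `ker (f ^ n)` stabilise,
and their limits `E` and `K` are complementary (Mathlib's Fitting decomposition). Then `f E = E`,
and `f` is injective on `E` because `ker f ≤ K`. For uniqueness, surjectivity of `f` on `E'` gives
`E' ≤ E` and nilpotency on `K'` gives `K' ≤ K`; in a modular lattice, a complementary pair lying
componentwise below another complementary pair equals it.
-/

open LinearMap

theorem IsCompl.eq_of_le_of_le {α : Type*} [Lattice α] [BoundedOrder α] [IsModularLattice α]
    {a b a' b' : α} (h : IsCompl a b) (h' : IsCompl a' b') (ha : a' ≤ a) (hb : b' ≤ b) :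
    a' = a ∧ b' = b := by
  have key : ∀ {x y x' y' : α}, IsCompl x y → IsCompl x' y' → x' ≤ x → y' ≤ y → x' = x :=
    fun h h' hx hy => eq_of_le_of_inf_le_of_sup_le hx
      ((inf_le_inf_left _ hy).trans (h.inf_eq_bot ▸ bot_le))
      (h'.sup_eq_top ▸ le_top)
  exact ⟨key h h' ha hb, key h.symm h'.symm hb ha⟩

namespace Module.End

section Semiring

variable {R M : Type*} [Semiring R] [AddCommMonoid M] [Module R M]

theorem le_iInf_range_pow_of_surjOn {f : Module.End R M} {p : Submodule R M}
    (hf : Set.SurjOn f p p) : p ≤ ⨅ n : ℕ, range (f ^ n) :=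
  le_iInf fun n x hx => by
    obtain ⟨y, -, hy⟩ := hf.iterate n hx
    exact ⟨y, by rw [Module.End.pow_apply, hy]⟩

theorem le_iSup_ker_pow_of_pow_apply_eq_zero {f : Module.End R M} {p : Submodule R M} {m : ℕ}
    (hf : ∀ x ∈ p, (f ^ m) x = 0) : p ≤ ⨆ n : ℕ, ker (f ^ n) :=
  fun x hx => Submodule.mem_iSup_of_mem m (hf x hx)

theorem exists_pow_apply_eq_zero_of_mem_iSup_ker_pow [IsNoetherian R M] (f : Module.End R M) :
    ∃ m : ℕ, ∀ x ∈ ⨆ n : ℕ, ker (f ^ n), (f ^ m) x = 0 := by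
  obtain ⟨m, hm⟩ := Filter.eventually_atTop.mp f.eventually_iSup_ker_pow_eq
  exact ⟨m, fun x hx => by rwa [hm m le_rfl] at hx⟩

theorem map_iInf_range_pow [IsArtinian R M] (f : Module.End R M) :
    (⨅ n : ℕ, range (f ^ n)).map f = ⨅ n : ℕ, range (f ^ n) := by
  obtain ⟨m, hm⟩ := Filter.eventually_atTop.mp f.eventually_iInf_range_pow_eq
  rw [hm m le_rfl, ← range_comp, ← Module.End.mul_eq_comp, ← pow_succ', ← hm (m + 1) m.le_succ,
    hm m le_rfl]

end Semiring

variable {R M : Type*} [Ring R] [AddCommGroup M] [Module R M] [IsNoetherian R M] [IsArtinian R M]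

theorem bijOn_iInf_range_pow (f : Module.End R M) :
    Set.BijOn f (⨅ n : ℕ, range (f ^ n) : Submodule R M)
      (⨅ n : ℕ, range (f ^ n) : Submodule R M) := by
  have himage : f '' (⨅ n : ℕ, range (f ^ n) : Submodule R M) =
      (⨅ n : ℕ, range (f ^ n) : Submodule R M) := by
    rw [← Submodule.map_coe, map_iInf_range_pow]
  have hdisj : Disjoint (⨅ n : ℕ, range (f ^ n)) (ker f) :=
    f.isCompl_iSup_ker_pow_iInf_range_pow.symm.disjoint.mono_right
      (le_iSup_ker_pow_of_pow_apply_eq_zero (m := 1) fun x hx => by rwa [pow_one])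
  exact ⟨Set.mapsTo_iff_image_subset.mpr himage.subset, injOn_of_disjoint_ker le_rfl hdisj,
    himage.symm.subset⟩

end Module.End

open Module.End in
/-- Fitting's lemma: for an endomorphism `f` of a finite-dimensional vector space `V`,
the eventual image `E = ⨅ n, range (f ^ n)` and the eventual kernel
`K = ⨆ n, ker (f ^ n)` are complementary, `f` restricts to a bijection of `E` and is
nilpotent on `K`, and this is the unique such decomposition. -/
theorem fitting_lemma (k : Type*) [Field k] (V : Type*) [AddCommGroup V] [Module k V]
    [FiniteDimensional k V] (f : V →ₗ[k] V) :
    IsCompl (⨅ n : ℕ, LinearMap.range (f ^ n)) (⨆ n : ℕ, LinearMap.ker (f ^ n)) ∧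
    Set.BijOn f (⨅ n : ℕ, LinearMap.range (f ^ n) : Submodule k V)
      (⨅ n : ℕ, LinearMap.range (f ^ n) : Submodule k V) ∧
    (∃ m : ℕ, ∀ x ∈ (⨆ n : ℕ, LinearMap.ker (f ^ n)), (f ^ m) x = 0) ∧
    ∀ E' K' : Submodule k V, IsCompl E' K' →
      Set.BijOn f E' E' → (∀ x ∈ K', f x ∈ K') →
      (∃ m : ℕ, ∀ x ∈ K', (f ^ m) x = 0) →
      E' = (⨅ n : ℕ, LinearMap.range (f ^ n)) ∧
        K' = (⨆ n : ℕ, LinearMap.ker (f ^ n)) := by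
  have hfitting := f.isCompl_iSup_ker_pow_iInf_range_pow.symm
  refine ⟨hfitting, bijOn_iInf_range_pow f, exists_pow_apply_eq_zero_of_mem_iSup_ker_pow f, ?_⟩
  rintro E' K' hcompl hbij - ⟨m, hnil⟩
  exact hfitting.eq_of_le_of_le hcompl (le_iInf_range_pow_of_surjOn hbij.surjOn)
    (le_iSup_ker_pow_of_pow_apply_eq_zero hnil)
end

section
/- Let k be a field, V a finite-dimensional k-vector space, and f : V →ₗ[k] V a linear endomorphism. Then the Fitting projection onto the eventual image lies in the linear span of the positive powers of f: there exists a linear endomorphism e of V such that e ∘ e = e, range(e) = ⨅_{n ∈ ℕ} range(f^n), ker(e) = ⨆_{n ∈ ℕ} ker(f^n), and e belongs to the k-linear span (inside Module.End k V) of the set {f^n | n ≥ 1}. -/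
/-!
Write the minimal polynomial of `f` as `X ^ n * u` with `X ∤ u` and pick a Bézout relation
`a * X ^ (n + 1) + b * u = 1`. Then `e = a(f) * f ^ (n + 1)` is an idempotent with
`f ^ (n + 1) * e = f ^ (n + 1)`, so `range (f ^ (n + 1)) ≤ range e` and
`ker e ≤ ker (f ^ (n + 1))`.
Conversely `e` is a multiple of `f` in the commutative algebra `k[f]`, so `e = e ^ m` is a multiple
of `f ^ m` on either side for every `m`, which gives the reverse inclusions.
-/

open Polynomial

namespace Module.End

variable {R M : Type*} [Semiring R] [AddCommMonoid M] [Module R M] {e f g : Module.End R M}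

theorem range_eq_iInf_range_pow_of_isIdempotentElem (he : IsIdempotentElem e)
    (hfg : Commute f g) (he_eq : e = f * g) {N : ℕ} (hN : f ^ N * e = f ^ N) :
    LinearMap.range e = ⨅ n : ℕ, LinearMap.range (f ^ n) := by
  refine le_antisymm (le_iInf fun n => ?_) ((iInf_le _ N).trans ?_)
  · have : e = f ^ n * (g ^ n * e) := by
      rw [← mul_assoc, ← hfg.mul_pow, ← he_eq, ← pow_succ, he.pow_succ_eq]
    rw [this, mul_eq_comp]
    exact LinearMap.range_comp_le_range _ _
  · have hcomm : Commute f e := he_eq ▸ (Commute.refl f).mul_right hfg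
    rw [← hN, (hcomm.pow_left N).eq, mul_eq_comp]
    exact LinearMap.range_comp_le_range _ _

theorem ker_eq_iSup_ker_pow_of_isIdempotentElem (he : IsIdempotentElem e)
    (hfg : Commute f g) (he_eq : e = f * g) {N : ℕ} (hN : f ^ N * e = f ^ N) :
    LinearMap.ker e = ⨆ n : ℕ, LinearMap.ker (f ^ n) := by
  refine le_antisymm ((?_ : _ ≤ LinearMap.ker (f ^ N)).trans
    (le_iSup (fun n => LinearMap.ker (f ^ n)) N)) (iSup_le fun n => ?_)
  · rw [← hN, mul_eq_comp]
    exact LinearMap.ker_le_ker_comp _ _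
  · have : e = e * g ^ n * f ^ n := by
      rw [mul_assoc, ← hfg.symm.mul_pow, ← hfg.eq, ← he_eq, ← pow_succ', he.pow_succ_eq]
    rw [this, mul_eq_comp]
    exact LinearMap.ker_le_ker_comp _ _

end Module.End

theorem Polynomial.aeval_X_mul_mem_span_pow {R A : Type*} [CommSemiring R] [Semiring A]
    [Algebra R A] (x : A) (q : R[X]) :
    aeval x (X * q) ∈ Submodule.span R {y : A | ∃ n : ℕ, 1 ≤ n ∧ y = x ^ n} := by
  induction q using Polynomial.induction_on' with
  | add p q hp hq => rw [mul_add, map_add]; exact Submodule.add_mem _ hp hq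
  | monomial i c =>
    rw [X_mul_monomial, aeval_monomial, ← Algebra.smul_def]
    exact Submodule.smul_mem _ _ (Submodule.subset_span ⟨i + 1, Nat.le_add_left 1 i, rfl⟩)

theorem IsIntegral.exists_isIdempotentElem_aeval_X_mul {k A : Type*} [Field k] [Ring A]
    [Algebra k A] {x : A} (hx : IsIntegral k x) :
    ∃ (q : k[X]) (N : ℕ),
      IsIdempotentElem (aeval x (X * q)) ∧ x ^ N * aeval x (X * q) = x ^ N := by
  have aeval_eq_zero (r : k[X]) (h : minpoly k x ∣ r) : aeval x r = 0 :=
    aeval_eq_zero_of_dvd_aeval_eq_zero h (minpoly.aeval k x)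
  obtain ⟨u, hpu, hXu⟩ :=
    (minpoly k x).exists_eq_pow_rootMultiplicity_mul_and_not_dvd (minpoly.ne_zero hx) 0
  rw [map_zero, sub_zero] at hpu hXu
  set n := (minpoly k x).rootMultiplicity 0
  obtain ⟨a, b, hab⟩ : IsCoprime ((X : k[X]) ^ (n + 1)) u :=
    (irreducible_X.coprime_iff_not_dvd.2 hXu).pow_left
  refine ⟨a * X ^ n, n + 1, ?_, ?_⟩
  · rw [IsIdempotentElem, ← map_mul, ← sub_eq_zero, ← map_sub]
    refine aeval_eq_zero _ ⟨-(a * b * X), ?_⟩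
    rw [hpu]; linear_combination (a * X ^ (n + 1)) * hab
  · rw [← sub_eq_zero, ← aeval_X_pow (R := k), ← map_mul, ← map_sub]
    refine aeval_eq_zero _ ⟨-(b * X), ?_⟩
    rw [hpu]; linear_combination (X ^ (n + 1) : k[X]) * hab

/-- For an endomorphism `f` of a finite-dimensional vector space, the Fitting projection
onto the eventual image is idempotent, has range the eventual image and kernel the
eventual kernel, and lies in the linear span of the positive powers of `f`. -/
theorem fitting_projection_in_span (k : Type*) [Field k] (V : Type*) [AddCommGroup V]
    [Module k V] [FiniteDimensional k V] (f : V →ₗ[k] V) :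
    ∃ e : Module.End k V, e ∘ₗ e = e ∧
      LinearMap.range e = (⨅ n : ℕ, LinearMap.range (f ^ n)) ∧
      LinearMap.ker e = (⨆ n : ℕ, LinearMap.ker (f ^ n)) ∧
      e ∈ Submodule.span k {g : Module.End k V | ∃ n : ℕ, 1 ≤ n ∧ g = f ^ n} := by
  obtain ⟨q, N, he, hN⟩ :=
    (Algebra.IsIntegral.isIntegral (R := k) f).exists_isIdempotentElem_aeval_X_mul
  have he_eq : aeval f (X * q) = f * aeval f q := by rw [map_mul, aeval_X]
  have hcomm : Commute f (aeval f q) := by simpa using (commute_X q).map (aeval f)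
  exact ⟨aeval f (X * q), he.eq,
    Module.End.range_eq_iInf_range_pow_of_isIdempotentElem he hcomm he_eq hN,
    Module.End.ker_eq_iSup_ker_pow_of_isIdempotentElem he hcomm he_eq hN,
    aeval_X_mul_mem_span_pow f q⟩
end

section
/- Let k be a field, V a finite-dimensional k-vector space, and f : V →ₗ[k] V a linear endomorphism. Then a vector x ∈ V is linearly periodic for f if and only if x belongs to the eventual image: x ∈ Submodule.span k {f^n(x) | n ≥ 1} if and only if x ∈ ⨅_{n ∈ ℕ} range(f^n). In particular, the set of linearly periodic points is a linear subspace of V. -/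
/-- A vector `x` is linearly periodic for an endomorphism `f` of a finite-dimensional
vector space (i.e. `x` lies in the span of `{f x, f² x, …}`) if and only if `x` belongs
to the eventual image `⨅ n, range (f ^ n)`. In particular, the set of linearly periodic
points is a linear subspace. -/
theorem linearly_periodic_iff_mem_eventualImage (k : Type*) [Field k] (V : Type*)
    [AddCommGroup V] [Module k V] [FiniteDimensional k V] (f : V →ₗ[k] V) (x : V) :
    x ∈ Submodule.span k {y : V | ∃ n : ℕ, 1 ≤ n ∧ y = (f ^ n) x} ↔
      x ∈ (⨅ n : ℕ, LinearMap.range (f ^ n)) := by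
  set S : ℕ → Set V := fun m => {y : V | ∃ n : ℕ, m ≤ n ∧ y = (f ^ n) x} with hS
  constructor
  · intro hx
    have key : ∀ m : ℕ, x ∈ Submodule.span k (S m) := by
      intro m
      induction m with
      | zero =>
        refine Submodule.span_mono (fun y hy => ?_) hx
        obtain ⟨n, -, hy⟩ := hy
        exact ⟨n, Nat.zero_le n, hy⟩
      | succ m ih =>
        have hsub : S m ⊆ (Submodule.span k (S (m + 1)) : Set V) := by
          rintro y ⟨n, hn, rfl⟩
          have : (f ^ n) x ∈ Submodule.map (f ^ n) (Submodule.span k (S 1)) :=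
            ⟨x, hx, rfl⟩
          rw [Submodule.map_span] at this
          refine Submodule.span_le.mpr ?_ this
          rintro z ⟨w, ⟨j, hj, rfl⟩, rfl⟩
          refine Submodule.subset_span ⟨n + j, by omega, ?_⟩
          rw [← Module.End.mul_apply, ← pow_add]
        exact Submodule.span_le.mpr hsub ih
    refine Submodule.mem_iInf _ |>.mpr fun m => ?_
    have hle : Submodule.span k (S m) ≤ LinearMap.range (f ^ m) := by
      refine Submodule.span_le.mpr ?_
      rintro y ⟨n, hn, rfl⟩
      exact ⟨(f ^ (n - m)) x, by rw [← Module.End.mul_apply, ← pow_add,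
        Nat.add_sub_cancel' hn]⟩
    exact hle (key m)
  · intro hx
    have hx' : ∀ m : ℕ, x ∈ LinearMap.range (f ^ m) := fun m =>
      Submodule.mem_iInf _ |>.mp hx m
    set U : Submodule k V := Submodule.span k (S 0) with hU
    have hxU : x ∈ U := Submodule.subset_span ⟨0, le_rfl, by simp⟩
    -- every generator of U lies in every range (f ^ m)
    have hUE : ∀ m : ℕ, U ≤ LinearMap.range (f ^ m) := by
      intro m
      refine Submodule.span_le.mpr ?_
      rintro y ⟨n, _, rfl⟩
      obtain ⟨z, hz⟩ := hx' m
      refine ⟨(f ^ n) z, ?_⟩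
      rw [← Module.End.mul_apply, ← pow_add, add_comm, pow_add, Module.End.mul_apply, hz]
    -- f is injective on U
    obtain ⟨N, -, hN⟩ := Module.End.exists_ker_pow_eq_ker_pow_succ f
    have hinj : ∀ y ∈ U, f y = 0 → y = 0 := by
      intro y hy hfy
      obtain ⟨z, rfl⟩ := hUE N hy
      have : z ∈ LinearMap.ker (f ^ (N + 1)) := by
        rw [LinearMap.mem_ker, pow_succ', Module.End.mul_apply]
        exact hfy
      rw [← Nat.succ_eq_add_one, ← hN, LinearMap.mem_ker] at this
      simp [this]
    -- map f U = span (S 1)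
    have himg : f '' (S 0) = S 1 := by
      ext y
      constructor
      · rintro ⟨w, ⟨n, -, rfl⟩, rfl⟩
        exact ⟨n + 1, by omega, by rw [← Module.End.mul_apply, ← pow_succ']⟩
      · rintro ⟨n, hn, rfl⟩
        refine ⟨(f ^ (n - 1)) x, ⟨n - 1, Nat.zero_le _, rfl⟩, ?_⟩
        rw [← Module.End.mul_apply, ← pow_succ', Nat.sub_add_cancel hn]
    have hmap : Submodule.map f U = Submodule.span k (S 1) := by
      rw [hU, Submodule.map_span, himg]
    have hle : Submodule.map f U ≤ U := by
      rw [hmap]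
      exact Submodule.span_mono fun y ⟨n, hn, hy⟩ => ⟨n, Nat.zero_le _, hy⟩
    -- finrank (map f U) = finrank U via injectivity
    have hker : LinearMap.ker (f.comp U.subtype) = ⊥ := by
      rw [LinearMap.ker_eq_bot']
      intro m hm
      exact Subtype.ext (hinj m m.2 hm)
    have hrange : LinearMap.range (f.comp U.subtype) = Submodule.map f U := by
      rw [LinearMap.range_comp, Submodule.range_subtype]
    have hfr : Module.finrank k U ≤ Module.finrank k (Submodule.map f U) := by
      rw [← hrange]
      exact le_of_eq (LinearMap.finrank_range_of_inj (LinearMap.ker_eq_bot.mp hker)).symm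
    have : Submodule.map f U = U := Submodule.eq_of_le_of_finrank_le hle hfr
    rw [hmap] at this
    rw [show {y : V | ∃ n : ℕ, 1 ≤ n ∧ y = (f ^ n) x} = S 1 from rfl, this]
    exact hxU
end

section
/- Let k be a field and let V, W be finite-dimensional k-vector spaces with linear endomorphisms f : V →ₗ[k] V and g : W →ₗ[k] W. Suppose f and g are shift equivalent: there exist linear maps u : V →ₗ[k] W and v : W →ₗ[k] V and a natural number n such that u ∘ f = g ∘ u, v ∘ g = f ∘ v, v ∘ u = f^n, and u ∘ v = g^n. Then the characteristic polynomials of f and g agree up to a power of X: there exist natural numbers i and j such that X^i * charpoly(f) = X^j * charpoly(g) in k[X]. -/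
/-!
By Fitting's lemma, for large `N` the space splits as `ker f^N ⊕ range f^N`, with `f` nilpotent
on the first summand and invertible on the second, so `charpoly f` is `X ^ dim (ker f^N)` times
the characteristic polynomial of the invertible part. The maps `u` and `v` send `range f^N` and
`range g^N` into each other, and on these subspaces `v ∘ u = f^n` and `u ∘ v = g^n` are invertible,
so `u` restricts to an isomorphism conjugating the invertible parts of `f` and `g`.
-/

open Polynomial Module

namespace LinearMap

section Semiring

variable {R M₁ M₂ M₃ : Type*} [Semiring R] [AddCommMonoid M₁] [Module R M₁]
  [AddCommMonoid M₂] [Module R M₂] [AddCommMonoid M₃] [Module R M₃]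

lemma mapsTo_ker_pow_of_comp_eq {f : End R M₁} {g : End R M₂} {u : M₁ →ₗ[R] M₂}
    (h : u ∘ₗ f = g ∘ₗ u) (N : ℕ) : ∀ x ∈ ker (f ^ N), u x ∈ ker (g ^ N) := by
  intro x hx
  rw [mem_ker] at hx ⊢
  rw [← comp_apply, Module.End.commute_pow_left_of_commute h.symm, comp_apply, hx, map_zero]

lemma mapsTo_range_pow_of_comp_eq {f : End R M₁} {g : End R M₂} {u : M₁ →ₗ[R] M₂}
    (h : u ∘ₗ f = g ∘ₗ u) (N : ℕ) : ∀ x ∈ range (f ^ N), u x ∈ range (g ^ N) := by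
  rintro _ ⟨y, rfl⟩
  exact ⟨u y, by rw [← comp_apply, Module.End.commute_pow_left_of_commute h.symm, comp_apply]⟩

lemma restrict_comp_restrict_of_comp_eq {p₁ : Submodule R M₁} {p₂ : Submodule R M₂}
    {p₃ : Submodule R M₃} {u : M₁ →ₗ[R] M₂} {v : M₂ →ₗ[R] M₃} {w : M₁ →ₗ[R] M₃}
    (h : v ∘ₗ u = w) (hu : ∀ x ∈ p₁, u x ∈ p₂) (hv : ∀ x ∈ p₂, v x ∈ p₃)
    (hw : ∀ x ∈ p₁, w x ∈ p₃) : v.restrict hv ∘ₗ u.restrict hu = w.restrict hw :=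
  ext fun x ↦ Subtype.ext (congr($h x))

lemma isNilpotent_restrict_ker_pow (f : End R M₁) (N : ℕ) :
    IsNilpotent (f.restrict (mapsTo_ker_pow_of_comp_eq rfl N)) :=
  ⟨N, ext fun x ↦ Subtype.ext <| by rw [Module.End.pow_restrict]; exact x.2⟩

end Semiring

section CommRing

variable {R M₁ M₂ : Type*} [CommRing R] [AddCommGroup M₁] [Module R M₁]
  [AddCommGroup M₂] [Module R M₂]

lemma injective_restrict_range_pow {f : End R M₁} {N : ℕ}
    (h : Disjoint (ker (f ^ N)) (range (f ^ N))) (hN : N ≠ 0) :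
    Function.Injective (f.restrict (mapsTo_range_pow_of_comp_eq rfl N)) := by
  rw [← ker_eq_bot, Submodule.eq_bot_iff]
  rintro ⟨x, hx⟩ hfx
  have hfx₀ : f x = 0 := congr_arg Subtype.val (mem_ker.mp hfx)
  have hker : x ∈ ker (f ^ N) := by
    obtain ⟨m, rfl⟩ := Nat.exists_eq_succ_of_ne_zero hN
    rw [mem_ker, pow_succ, Module.End.mul_apply, hfx₀, map_zero]
  exact Subtype.ext (Submodule.disjoint_def.mp h x hker hx)

variable [Module.Free R M₁] [Module.Finite R M₁] [Module.Free R M₂] [Module.Finite R M₂]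

lemma charpoly_eq_of_comp_eq_of_bijective {f : End R M₁} {g : End R M₂} {u : M₁ →ₗ[R] M₂}
    (h : u ∘ₗ f = g ∘ₗ u) (hu : Function.Bijective u) : f.charpoly = g.charpoly := by
  let e := LinearEquiv.ofBijective u hu
  have : e.conj f = g := by
    ext x
    simpa [e] using congr($h (e.symm x))
  rw [← this, LinearEquiv.charpoly_conj]

lemma charpoly_eq_of_shift_equiv_of_injective_of_surjective {f : End R M₁} {g : End R M₂}
    {u : M₁ →ₗ[R] M₂} {v : M₂ →ₗ[R] M₁} {n : ℕ} (hf : Function.Injective f)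
    (hg : Function.Surjective g) (hu : u ∘ₗ f = g ∘ₗ u) (hvu : v ∘ₗ u = f ^ n)
    (huv : u ∘ₗ v = g ^ n) : f.charpoly = g.charpoly := by
  refine charpoly_eq_of_comp_eq_of_bijective hu ⟨?_, ?_⟩
  · refine Function.Injective.of_comp (f := v) ?_
    rw [← coe_comp, hvu, Module.End.coe_pow]
    exact hf.iterate n
  · refine Function.Surjective.of_comp (g := v) ?_
    rw [← coe_comp, huv, Module.End.coe_pow]
    exact hg.iterate n

lemma charpoly_eq_mul_of_isCompl {f : End R M₁} {p q : Submodule R M₁} [Module.Free R p]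
    [Module.Finite R p] [Module.Free R q] [Module.Finite R q] (h : IsCompl p q)
    (hp : ∀ x ∈ p, f x ∈ p) (hq : ∀ x ∈ q, f x ∈ q) :
    f.charpoly = (f.restrict hp).charpoly * (f.restrict hq).charpoly := by
  rw [← charpoly_prodMap, ← (Submodule.prodEquivOfIsCompl p q h).charpoly_conj]
  congr 1
  ext x
  obtain ⟨y, rfl⟩ := (Submodule.prodEquivOfIsCompl p q h).surjective x
  rw [LinearEquiv.conj_apply_apply, LinearEquiv.symm_apply_apply,
    Submodule.coe_prodEquivOfIsCompl', Submodule.coe_prodEquivOfIsCompl', map_add]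
  rfl

end CommRing

variable {K V : Type*} [Field K] [AddCommGroup V] [Module K V] [FiniteDimensional K V]

lemma charpoly_eq_X_pow_mul_charpoly_restrict_range_pow {f : End K V} {N : ℕ}
    (h : IsCompl (ker (f ^ N)) (range (f ^ N))) :
    f.charpoly = X ^ finrank K (ker (f ^ N)) *
      (f.restrict (mapsTo_range_pow_of_comp_eq rfl N)).charpoly := by
  rw [charpoly_eq_mul_of_isCompl h (mapsTo_ker_pow_of_comp_eq rfl N),
    (isNilpotent_restrict_ker_pow f N).charpoly_eq_X_pow_finrank]

end LinearMap

open LinearMap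

/-- Shift equivalent endomorphisms of finite-dimensional vector spaces have equal
characteristic polynomials up to a power of `X`. -/
theorem charpoly_eq_of_shift_equivalent (k : Type*) [Field k]
    (V W : Type*) [AddCommGroup V] [Module k V] [FiniteDimensional k V]
    [AddCommGroup W] [Module k W] [FiniteDimensional k W]
    (f : V →ₗ[k] V) (g : W →ₗ[k] W) (u : V →ₗ[k] W) (v : W →ₗ[k] V) (n : ℕ)
    (hu : u ∘ₗ f = g ∘ₗ u) (hv : v ∘ₗ g = f ∘ₗ v)
    (hvu : v ∘ₗ u = f ^ n) (huv : u ∘ₗ v = g ^ n) :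
    ∃ i j : ℕ, Polynomial.X ^ i * f.charpoly = Polynomial.X ^ j * g.charpoly := by
  obtain ⟨N, ⟨hfN, hgN⟩, hN⟩ := ((f.eventually_isCompl_ker_pow_range_pow.and
    g.eventually_isCompl_ker_pow_range_pow).and (Filter.eventually_ne_atTop 0)).exists
  have hu' := mapsTo_range_pow_of_comp_eq hu N
  have hv' := mapsTo_range_pow_of_comp_eq hv N
  have hg' := mapsTo_range_pow_of_comp_eq (rfl : g ∘ₗ g = g ∘ₗ g) N
  have hcharpoly := charpoly_eq_of_shift_equiv_of_injective_of_surjective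
    (injective_restrict_range_pow hfN.disjoint hN)
    (injective_iff_surjective.mp (injective_restrict_range_pow hgN.disjoint hN))
    (restrict_comp_restrict_of_comp_eq hu _ hu' fun x hx ↦ hg' _ (hu' x hx))
    ((restrict_comp_restrict_of_comp_eq hvu hu' hv' _).trans (Module.End.pow_restrict n _).symm)
    ((restrict_comp_restrict_of_comp_eq huv hv' hu' _).trans (Module.End.pow_restrict n _).symm)
  refine ⟨finrank k (ker (g ^ N)), finrank k (ker (f ^ N)), ?_⟩
  rw [charpoly_eq_X_pow_mul_charpoly_restrict_range_pow hfN,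
    charpoly_eq_X_pow_mul_charpoly_restrict_range_pow hgN, hcharpoly]
  ring
end

section
/- Let k be an algebraically closed field, V a finite-dimensional k-vector space, and f : Module.End k V a linear endomorphism. Then the eventual image of f is the sum of the generalized eigenspaces for the nonzero eigenvalues: ⨅_{n ∈ ℕ} range(f^n) = ⨆_{λ ∈ k, λ ≠ 0} maxGenEigenspace(f, λ). -/
/-!
By Fitting's lemma `V` is the direct sum of the generalized `0`-eigenspace `⨆ n, ker (f ^ n)` and
the eventual image. On a generalized eigenspace for `μ ≠ 0`, `f` is `μ` plus a commuting nilpotent,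
hence invertible, so that eigenspace lies in the eventual image. Since the generalized eigenspaces
span `V` over an algebraically closed field, the modular law forces equality.
-/

open LinearMap

namespace Module.End

section Semiring

variable {R M : Type*} [Semiring R] [AddCommMonoid M] [Module R M]

lemma le_range_of_isUnit_restrict {f : End R M} {p : Submodule R M} (h : ∀ x ∈ p, f x ∈ p)
    (hf : IsUnit (f.restrict h)) : p ≤ range f := by
  intro x hx
  obtain ⟨y, hy⟩ := ((End.isUnit_iff _).mp hf).surjective ⟨x, hx⟩
  exact ⟨y, congrArg Subtype.val hy⟩

lemma le_range_pow_of_isUnit_restrict {f : End R M} {p : Submodule R M} (h : ∀ x ∈ p, f x ∈ p)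
    (hf : IsUnit (f.restrict h)) (n : ℕ) : p ≤ range (f ^ n) :=
  le_range_of_isUnit_restrict _ (pow_restrict n h ▸ hf.pow n)

end Semiring

variable {R M : Type*} [CommRing R] [AddCommGroup M] [Module R M]

lemma maxGenEigenspace_zero_eq_iSup_ker_pow (f : End R M) :
    f.maxGenEigenspace 0 = ⨆ n : ℕ, ker (f ^ n) := by
  simp [← iSup_genEigenspace_eq, genEigenspace_nat]

lemma isUnit_restrict_maxGenEigenspace [IsNoetherian R M] (f : End R M) {μ : R}
    (hμ : IsUnit μ) :
    IsUnit (f.restrict (mapsTo_maxGenEigenspace_of_comm (Commute.refl f) μ)) := by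
  have hnil := f.isNilpotent_restrict_maxGenEigenspace_sub_algebraMap μ
  have hrestrict_sub : (f - algebraMap R (End R M) μ).restrict
        (mapsTo_maxGenEigenspace_of_comm (Algebra.mul_sub_algebraMap_commutes f μ) μ) =
      f.restrict (mapsTo_maxGenEigenspace_of_comm (Commute.refl f) μ) - algebraMap R _ μ := by
    ext; rfl
  rw [hrestrict_sub] at hnil
  simpa using hnil.isUnit_add_right_of_commute (hμ.map _) (Algebra.commutes μ _).symm

lemma maxGenEigenspace_le_range_pow [IsNoetherian R M] (f : End R M) {μ : R} (hμ : IsUnit μ)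
    (n : ℕ) : f.maxGenEigenspace μ ≤ range (f ^ n) :=
  le_range_pow_of_isUnit_restrict _ (f.isUnit_restrict_maxGenEigenspace hμ) n

end Module.End

/-- Over an algebraically closed field, the eventual image of an endomorphism `f` of a
finite-dimensional vector space is the sum of the generalized eigenspaces of `f` for
the nonzero eigenvalues. -/
theorem eventualImage_eq_sup_maxGenEigenspace (k : Type*) [Field k] [IsAlgClosed k]
    (V : Type*) [AddCommGroup V] [Module k V] [FiniteDimensional k V]
    (f : Module.End k V) :
    (⨅ n : ℕ, LinearMap.range (f ^ n)) =
      ⨆ (μ : k) (_ : μ ≠ 0), f.maxGenEigenspace μ := by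
  have hfitting : IsCompl (f.maxGenEigenspace 0) (⨅ n : ℕ, range (f ^ n)) :=
    f.maxGenEigenspace_zero_eq_iSup_ker_pow ▸ f.isCompl_iSup_ker_pow_iInf_range_pow
  have hspan :
      (⨆ (μ : k) (_ : μ ≠ 0), f.maxGenEigenspace μ) ⊔ f.maxGenEigenspace 0 = ⊤ := by
    rw [sup_comm, ← iSup_split_single, Module.End.iSup_maxGenEigenspace_eq_top]
  have hle : ⨆ (μ : k) (_ : μ ≠ 0), f.maxGenEigenspace μ ≤ ⨅ n : ℕ, range (f ^ n) :=
    iSup₂_le fun μ hμ ↦ le_iInf (f.maxGenEigenspace_le_range_pow (Ne.isUnit hμ))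
  refine (eq_of_le_of_inf_le_of_sup_le (z := f.maxGenEigenspace 0) hle ?_ ?_).symm
  · rw [inf_comm, hfitting.inf_eq_bot]
    exact bot_le
  · rw [hspan]
    exact le_top
end

section
/- Every surjective distance-decreasing self-map of a compact metric space is an isometry: if X is a compact metric space and f : X → X is 1-Lipschitz (dist(f x, f x') ≤ dist(x, x') for all x, x') and surjective, then f is an isometry. -/
/-!
A surjective 1-Lipschitz self-map of a compact space is recurrent: choosing preimages `q k` of a
point `p` under `g^[k]`, two of them are close, say `q i` and `q j` with `i < j`, and applying the
1-Lipschitz map `g^[j]` shows that `g^[j - i] p` is as close to `p`. Applied to `f × f` on `X × X`,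
this makes `(f^[n] x, f^[n] y)` close to `(x, y)` for some `n ≥ 1`, whence
`dist x y ≈ dist (f^[n] x) (f^[n] y) ≤ dist (f x) (f y)`.
-/

open Function

theorem LipschitzWith.prodMap {α β γ δ : Type*} [PseudoEMetricSpace α] [PseudoEMetricSpace β]
    [PseudoEMetricSpace γ] [PseudoEMetricSpace δ] {K : NNReal} {f : α → β} {g : γ → δ}
    (hf : LipschitzWith K f) (hg : LipschitzWith K g) : LipschitzWith K (Prod.map f g) := by
  have h := (hf.comp LipschitzWith.prod_fst).prodMk (hg.comp LipschitzWith.prod_snd)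
  rwa [max_self, mul_one] at h

theorem CompactSpace.exists_lt_dist_lt {Y : Type*} [PseudoMetricSpace Y] [CompactSpace Y]
    (u : ℕ → Y) {ε : ℝ} (hε : 0 < ε) : ∃ i j, i < j ∧ dist (u i) (u j) < ε := by
  obtain ⟨_, φ, hφ, hlim⟩ := CompactSpace.tendsto_subseq u
  obtain ⟨N, hN⟩ := Metric.cauchySeq_iff.1 hlim.cauchySeq ε hε
  exact ⟨φ N, φ (N + 1), hφ N.lt_succ_self, hN N le_rfl (N + 1) N.le_succ⟩

namespace LipschitzWith

variable {Y : Type*} [PseudoMetricSpace Y] {g : Y → Y}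

theorem dist_iterate_le (hg : LipschitzWith 1 g) (n : ℕ) (x y : Y) :
    dist (g^[n] x) (g^[n] y) ≤ dist x y := by
  simpa using (hg.iterate n).dist_le_mul x y

theorem dist_iterate_le_dist_apply (hg : LipschitzWith 1 g) {n : ℕ} (hn : 0 < n) (x y : Y) :
    dist (g^[n] x) (g^[n] y) ≤ dist (g x) (g y) := by
  obtain ⟨m, rfl⟩ := Nat.exists_eq_add_of_lt hn
  simpa only [zero_add, iterate_succ_apply] using hg.dist_iterate_le m (g x) (g y)

theorem exists_dist_iterate_lt [CompactSpace Y] (hg : LipschitzWith 1 g) (hs : Surjective g)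
    (p : Y) {ε : ℝ} (hε : 0 < ε) : ∃ n, 0 < n ∧ dist (g^[n] p) p < ε := by
  choose q hq using fun k => hs.iterate k p
  obtain ⟨i, j, hij, hdist⟩ := CompactSpace.exists_lt_dist_lt q hε
  refine ⟨j - i, Nat.sub_pos_of_lt hij, lt_of_le_of_lt ?_ hdist⟩
  have hqi : g^[j] (q i) = g^[j - i] p := by
    rw [← Nat.sub_add_cancel hij.le, iterate_add_apply, hq, Nat.add_sub_cancel]
  simpa only [hqi, hq] using hg.dist_iterate_le j (q i) (q j)

end LipschitzWith

/-- Every surjective 1-Lipschitz self-map of a compact metric space is an isometry. -/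
theorem surjective_lipschitz_isometry (X : Type*) [MetricSpace X] [CompactSpace X]
    (f : X → X) (hf : LipschitzWith 1 f) (hs : Function.Surjective f) : Isometry f := by
  refine Isometry.of_dist_eq fun x y => le_antisymm (by simpa using hf.dist_le_mul x y) ?_
  refine le_of_forall_pos_le_add fun ε hε => ?_
  obtain ⟨n, hn, hclose⟩ := (hf.prodMap hf).exists_dist_iterate_lt (hs.prodMap hs) (x, y)
    (half_pos hε)
  rw [Prod.map_iterate, Prod.map_apply, Prod.dist_eq, max_lt_iff] at hclose
  calc dist x y ≤ dist x (f^[n] x) + dist (f^[n] x) (f^[n] y) + dist (f^[n] y) y :=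
        dist_triangle4 _ _ _ _
    _ ≤ ε / 2 + dist (f x) (f y) + ε / 2 := by
        rw [dist_comm x]
        gcongr
        exacts [hclose.1.le, hf.dist_iterate_le_dist_apply hn x y, hclose.2.le]
    _ = dist (f x) (f y) + ε := by ring
end

section
/- Let Y be a compact metric space and e : Y ≃ᵢ Y a surjective self-isometry (isometric equivalence) of Y. Then the inverse of e lies in the closure of the set of iterates of e in the space of continuous self-maps of Y: regarding maps as elements of C(Y, Y) with the topology of uniform convergence (equivalently, the compact-open topology), the continuous map e.symm belongs to the closure of {h ∈ C(Y, Y) | ∃ n ∈ ℕ, h = e^[n] as functions}. -/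
private lemma iterate_isometry {Y : Type*} [MetricSpace Y] (e : Y ≃ᵢ Y) (n : ℕ) :
    Isometry ((⇑e)^[n]) := by
  induction n with
  | zero => simpa using isometry_id
  | succ k ih =>
    rw [Function.iterate_succ]
    exact ih.comp e.isometry

/-- For a self-isometric-equivalence `e` of a compact metric space `Y`, the inverse
`e.symm` lies in the closure, in `C(Y, Y)` with the compact-open topology, of the set
of iterates of `e`. -/
theorem symm_mem_closure_iterates (Y : Type*) [MetricSpace Y] [CompactSpace Y]
    (e : Y ≃ᵢ Y) :
    (⟨⇑e.symm, e.symm.continuous⟩ : C(Y, Y)) ∈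
      closure {h : C(Y, Y) | ∃ n : ℕ, ⇑h = (⇑e)^[n]} := by
  rw [Metric.mem_closure_iff]
  intro ε hε
  -- cover `Y` by finitely many balls of radius `ε/4`
  obtain ⟨t, htfin, htcov⟩ :=
    Metric.totallyBounded_iff.mp (isCompact_univ (X := Y)).totallyBounded (ε / 4) (by linarith)
  haveI : Fintype t := htfin.fintype
  -- the sequence of tuples of values of the iterates at the centers
  set g : ℕ → (t → Y) := fun n l => (⇑e)^[n] l with hg
  -- cover the compact space `t → Y` by finitely many balls of radius `ε/8`
  obtain ⟨T, hTfin, hTcov⟩ :=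
    Metric.totallyBounded_iff.mp (isCompact_univ (X := t → Y)).totallyBounded (ε / 8)
      (by linarith)
  haveI : Finite T := hTfin.to_subtype
  -- pick, for each `n`, a center of a ball containing `g n`
  have hmem : ∀ n : ℕ, ∃ c : T, g n ∈ Metric.ball (c : t → Y) (ε / 8) := by
    intro n
    obtain ⟨c, hc, hgc⟩ := Set.mem_iUnion₂.mp (hTcov (Set.mem_univ (g n)))
    exact ⟨⟨c, hc⟩, hgc⟩
  choose c hc using hmem
  -- pigeonhole: two distinct indices with the same center
  obtain ⟨m, m', hmm', hcc⟩ := Finite.exists_ne_map_eq_of_infinite c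
  wlog hlt : m < m' generalizing m m'
  · exact this m' m hmm'.symm hcc.symm (by omega)
  -- the iterates `g m` and `g m'` are `ε/4`-close
  have hclose : dist (g m) (g m') < ε / 4 := by
    have h1 := hc m
    have h2 := hc m'
    rw [Metric.mem_ball] at h1 h2
    rw [← hcc] at h2
    have h3 : dist (g m) (g m') ≤ dist (g m) (c m : t → Y) + dist (g m') (c m : t → Y) :=
      dist_triangle_right _ _ _
    linarith
  -- the candidate iterate
  set n : ℕ := m' - m - 1 with hn
  have hj : m + 1 + n = m' := by omega
  refine ⟨⟨(⇑e)^[n], (iterate_isometry e n).continuous⟩, ⟨n, rfl⟩, ?_⟩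
  rw [ContinuousMap.dist_lt_iff hε]
  intro y
  simp only [ContinuousMap.coe_mk]
  -- key identity: dist (e.symm y) (e^[n] y) = dist (e^[m] y) (e^[m'] y)
  have key : dist (e.symm y) ((⇑e)^[n] y) = dist ((⇑e)^[m] y) ((⇑e)^[m'] y) := by
    have h1 : (⇑e)^[m + 1] (e.symm y) = (⇑e)^[m] y := by
      rw [Function.iterate_succ_apply, e.apply_symm_apply]
    have h2 : (⇑e)^[m + 1] ((⇑e)^[n] y) = (⇑e)^[m'] y := by
      rw [← Function.iterate_add_apply, hj]
    rw [← h1, ← h2, (iterate_isometry e (m + 1)).dist_eq]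
  rw [key]
  -- choose a center `z ∈ t` with `y` in its ball
  have hy := htcov (Set.mem_univ y)
  obtain ⟨z, hz, hyz⟩ := Set.mem_iUnion₂.mp hy
  rw [Metric.mem_ball] at hyz
  have hzt : (⟨z, hz⟩ : t) ∈ (Set.univ : Set t) := Set.mem_univ _
  have hmid : dist ((⇑e)^[m] z) ((⇑e)^[m'] z) < ε / 4 := by
    have := dist_le_pi_dist (g m) (g m') ⟨z, hz⟩
    calc dist ((⇑e)^[m] z) ((⇑e)^[m'] z) = dist (g m ⟨z, hz⟩) (g m' ⟨z, hz⟩) := rfl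
      _ ≤ dist (g m) (g m') := dist_le_pi_dist _ _ _
      _ < ε / 4 := hclose
  have hd1 : dist ((⇑e)^[m] y) ((⇑e)^[m] z) < ε / 4 := by
    rw [(iterate_isometry e m).dist_eq]; exact hyz
  have hd3 : dist ((⇑e)^[m'] z) ((⇑e)^[m'] y) < ε / 4 := by
    rw [(iterate_isometry e m').dist_eq, dist_comm]; exact hyz
  calc dist ((⇑e)^[m] y) ((⇑e)^[m'] y)
      ≤ dist ((⇑e)^[m] y) ((⇑e)^[m] z) + dist ((⇑e)^[m] z) ((⇑e)^[m'] z)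
        + dist ((⇑e)^[m'] z) ((⇑e)^[m'] y) := dist_triangle4 _ _ _ _
    _ < ε / 4 + ε / 4 + ε / 4 := by linarith
    _ < ε := by linarith
end

section
/- Let X be a compact metric space and f : X → X a 1-Lipschitz map. Then there is exactly one idempotent in the closure of the positive iterates of f: there exists h ∈ C(X, X) such that h lies in the closure of {g ∈ C(X, X) | ∃ n ≥ 1, g = f^[n] as functions}, h ∘ h = h, and the range of h equals the eventual image ⋂_{n ∈ ℕ} f^[n](X); moreover any h' in that closure with h' ∘ h' = h' equals h. -/
open Set Filter Topology
set_option linter.unusedSectionVars false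
set_option linter.deprecated false

section
variable {X : Type*} [MetricSpace X] [CompactSpace X]

lemma isCompact_lip : IsCompact {g : C(X, X) | LipschitzWith 1 ⇑g} := by
  apply ArzelaAscoli.isCompact_of_equicontinuous
  · have himg : (ContinuousMap.toFun '' {g : C(X, X) | LipschitzWith 1 ⇑g})
        = {F : X → X | LipschitzWith 1 F} := by
      ext F
      constructor
      · rintro ⟨g, hg, rfl⟩; exact hg
      · intro hF; exact ⟨⟨F, hF.continuous⟩, hF, rfl⟩
    rw [himg]
    have hclosed : IsClosed {F : X → X | LipschitzWith 1 F} := by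
      have heq : {F : X → X | LipschitzWith 1 F}
          = ⋂ (x : X) (y : X), {F : X → X | dist (F x) (F y) ≤ dist x y} := by
        ext F
        simp only [mem_setOf_eq, mem_iInter, lipschitzWith_iff_dist_le_mul,
          NNReal.coe_one, one_mul]
      rw [heq]
      exact isClosed_iInter fun x => isClosed_iInter fun y =>
        isClosed_le (Continuous.dist (continuous_apply x) (continuous_apply y)) continuous_const
    exact hclosed.isCompact
  · exact Metric.equicontinuous_of_continuity_modulus id (by simpa using (tendsto_id (α := ℝ)))
      _ (fun x y i => by simpa using i.2.dist_le_mul x y)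

variable (f : X → X)

/-- iterates are 1-Lipschitz -/
lemma lip_iterate (hf : LipschitzWith 1 f) (n : ℕ) : LipschitzWith 1 (f^[n]) := by
  simpa using hf.iterate n

/-- the n-th iterate as a continuous map -/
noncomputable def itc (hf : LipschitzWith 1 f) (n : ℕ) : C(X, X) := ⟨f^[n], (lip_iterate f hf n).continuous⟩

@[simp] lemma itc_apply (hf : LipschitzWith 1 f) (n : ℕ) (x : X) : itc f hf n x = f^[n] x := rfl

/-- closure of iterates with exponent at least j -/
def P (j : ℕ) : Set C(X, X) := closure {g : C(X, X) | ∃ n : ℕ, j ≤ n ∧ ⇑g = f^[n]}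

lemma itc_mem_P (hf : LipschitzWith 1 f) {j n : ℕ} (hn : j ≤ n) : itc f hf n ∈ P f j :=
  subset_closure ⟨n, hn, rfl⟩

lemma lip_of_mem_P (hf : LipschitzWith 1 f) {j : ℕ} {g : C(X, X)} (hg : g ∈ P f j) : LipschitzWith 1 ⇑g := by
  have : P f j ⊆ {g : C(X, X) | LipschitzWith 1 ⇑g} := by
    apply closure_minimal _ isCompact_lip.isClosed
    rintro g ⟨n, -, hgn⟩
    simpa [hgn] using lip_iterate f hf n
  exact this hg

/-- composition with a fixed map on the right is 1-Lipschitz on C(X,X) -/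
lemma lip_comp_right (c : C(X, X)) :
    LipschitzWith 1 (fun g : C(X, X) => g.comp c) := by
  apply LipschitzWith.of_dist_le_mul
  intro g₁ g₂
  rw [NNReal.coe_one, one_mul]
  refine (ContinuousMap.dist_le dist_nonneg).2 fun x => ?_
  exact ContinuousMap.dist_apply_le_dist (c x)

/-- composition with a fixed 1-Lipschitz map on the left is 1-Lipschitz on C(X,X) -/
lemma lip_comp_left (c : C(X, X)) (hc : LipschitzWith 1 ⇑c) :
    LipschitzWith 1 (fun g : C(X, X) => c.comp g) := by
  apply LipschitzWith.of_dist_le_mul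
  intro g₁ g₂
  rw [NNReal.coe_one, one_mul]
  refine (ContinuousMap.dist_le dist_nonneg).2 fun x => ?_
  calc dist (c (g₁ x)) (c (g₂ x)) ≤ dist (g₁ x) (g₂ x) := by
        simpa using hc.dist_le_mul (g₁ x) (g₂ x)
    _ ≤ dist g₁ g₂ := ContinuousMap.dist_apply_le_dist x

lemma comp_mem_P (hf : LipschitzWith 1 f) {a b : ℕ} {g g' : C(X, X)} (hg : g ∈ P f a) (hg' : g' ∈ P f b) :
    g.comp g' ∈ P f (a + b) := by
  have step1 : ∀ g' : C(X, X), (∃ m : ℕ, b ≤ m ∧ ⇑g' = f^[m]) →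
      g.comp g' ∈ P f (a + b) := by
    rintro g' ⟨m, hm, hg'm⟩
    have : MapsTo (fun u : C(X, X) => u.comp g')
        {u : C(X, X) | ∃ n : ℕ, a ≤ n ∧ ⇑u = f^[n]} {u : C(X, X) | ∃ n : ℕ, a + b ≤ n ∧ ⇑u = f^[n]} := by
      rintro u ⟨n, hn, hun⟩
      refine ⟨n + m, by omega, ?_⟩
      show ⇑u ∘ ⇑g' = f^[n + m]
      rw [hun, hg'm, Function.iterate_add]
    exact map_mem_closure (f := fun u : C(X, X) => u.comp g') (lip_comp_right g').continuous hg this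
  have hmaps : MapsTo (fun u : C(X, X) => g.comp u)
      {u : C(X, X) | ∃ m : ℕ, b ≤ m ∧ ⇑u = f^[m]} (P f (a + b)) := fun u hu => step1 u hu
  exact isClosed_closure.closure_subset
    (map_mem_closure (f := fun u : C(X, X) => g.comp u) (lip_comp_left g (lip_of_mem_P f hf hg)).continuous hg' hmaps)

/-- elements of `P j` take values in `f^[j] '' univ` -/
lemma mem_image_of_mem_P (hf : LipschitzWith 1 f) {j : ℕ} {g : C(X, X)} (hg : g ∈ P f j) (x : X) :
    g x ∈ f^[j] '' Set.univ := by
  have hclosed : IsClosed (f^[j] '' Set.univ) :=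
    (isCompact_univ.image (lip_iterate f hf j).continuous).isClosed
  obtain ⟨u, hu, hlim⟩ := mem_closure_iff_seq_limit.1 hg
  have hev : Tendsto (fun k => u k x) atTop (𝓝 (g x)) :=
    ((continuous_eval_const x).tendsto g).comp hlim
  refine hclosed.mem_of_tendsto hev (Eventually.of_forall fun k => ?_)
  obtain ⟨n, hn, hun⟩ := hu k
  have : u k x = f^[j] (f^[n - j] x) := by
    rw [hun, ← Function.iterate_add_apply]
    congr 1
    omega
  exact this ▸ ⟨f^[n - j] x, mem_univ _, rfl⟩

lemma recurrence (hf : LipschitzWith 1 f) {ε : ℝ} (hε : 0 < ε) (N : ℕ) :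
    ∃ m : ℕ, N ≤ m ∧ 1 ≤ m ∧
      ∀ x ∈ ⋂ n : ℕ, f^[n] '' Set.univ, dist (f^[m] x) x ≤ ε := by
  obtain ⟨g, -, φ, hφ, hlim⟩ := isCompact_lip.tendsto_subseq
    (x := fun k => itc f hf k) (fun k => lip_iterate f hf k)
  have hcauchy := hlim.cauchySeq
  rw [Metric.cauchySeq_iff] at hcauchy
  obtain ⟨K, hK⟩ := hcauchy ε hε
  set l := K + N + 1 with hl
  have hgap : ∀ d, φ K + d ≤ φ (K + d) := by
    intro d
    induction d with
    | zero => simp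
    | succ d ih =>
      have := hφ (show K + d < K + (d+1) by omega)
      omega
  have hgapl : φ K + (N + 1) ≤ φ l := by
    have h1 := hgap (N + 1)
    have h2 : K + (N + 1) = l := by omega
    rwa [h2] at h1
  refine ⟨φ l - φ K, by omega, by omega, fun x hx => ?_⟩
  obtain ⟨y, -, hy⟩ : x ∈ f^[φ K] '' Set.univ := Set.mem_iInter.1 hx (φ K)
  have key : f^[φ l - φ K] x = f^[φ l] y := by
    rw [← hy, ← Function.iterate_add_apply]
    congr 1
    omega
  have hKl := hK l (by omega) K (le_refl K)
  calc dist (f^[φ l - φ K] x) x = dist (f^[φ l] y) (f^[φ K] y) := by rw [key, hy]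
    _ = dist ((itc f hf (φ l)) y) ((itc f hf (φ K)) y) := rfl
    _ ≤ dist (itc f hf (φ l)) (itc f hf (φ K)) := ContinuousMap.dist_apply_le_dist y
    _ ≤ ε := le_of_lt hKl

lemma exists_h (hf : LipschitzWith 1 f) :
    ∃ h : C(X, X), ∃ ν : ℕ → ℕ, (∀ k, k ≤ ν k ∧ 1 ≤ ν k) ∧
      Filter.Tendsto (fun k => itc f hf (ν k)) Filter.atTop (𝓝 h) ∧
      ∀ x ∈ ⋂ n : ℕ, f^[n] '' Set.univ, h x = x := by
  have hch : ∀ k : ℕ, ∃ m : ℕ, k ≤ m ∧ 1 ≤ m ∧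
      ∀ x ∈ ⋂ n : ℕ, f^[n] '' Set.univ, dist (f^[m] x) x ≤ 1 / (k + 1) :=
    fun k => recurrence f hf (by positivity) k
  choose m hm1 hm2 hm3 using hch
  obtain ⟨h, -, ψ, hψ, hlim⟩ := isCompact_lip.tendsto_subseq
    (x := fun k => itc f hf (m k)) (fun k => lip_iterate f hf (m k))
  refine ⟨h, m ∘ ψ, fun k => ⟨le_trans (hψ.le_apply) (hm1 (ψ k)), hm2 (ψ k)⟩, hlim, ?_⟩
  intro x hx
  have heval : Filter.Tendsto (fun k => itc f hf (m (ψ k)) x) Filter.atTop (𝓝 (h x)) :=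
    ((continuous_eval_const x).tendsto h).comp hlim
  have heval' : Filter.Tendsto (fun k => itc f hf (m (ψ k)) x) Filter.atTop (𝓝 x) := by
    rw [tendsto_iff_dist_tendsto_zero]
    apply squeeze_zero (fun k => dist_nonneg) (fun k => hm3 (ψ k) x hx)
    have : Filter.Tendsto (fun k : ℕ => 1 / ((k : ℝ) + 1)) Filter.atTop (𝓝 0) :=
      tendsto_one_div_add_atTop_nhds_zero_nat
    exact this.comp (hψ.tendsto_atTop)
  exact tendsto_nhds_unique heval heval'

lemma iterate_isometry_s16 (hf : LipschitzWith 1 f) {x y : X}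
    (hx : x ∈ ⋂ n : ℕ, f^[n] '' Set.univ) (hy : y ∈ ⋂ n : ℕ, f^[n] '' Set.univ) (j : ℕ) :
    dist x y ≤ dist (f^[j] x) (f^[j] y) := by
  obtain ⟨h, ν, hν, hlim, hΛ⟩ := exists_h f hf
  have hdx : Filter.Tendsto (fun k => itc f hf (ν k) x) Filter.atTop (𝓝 x) := by
    have := ((continuous_eval_const x).tendsto h).comp hlim
    rwa [hΛ x hx] at this
  have hdy : Filter.Tendsto (fun k => itc f hf (ν k) y) Filter.atTop (𝓝 y) := by
    have := ((continuous_eval_const y).tendsto h).comp hlim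
    rwa [hΛ y hy] at this
  have hdist : Filter.Tendsto (fun k => dist (itc f hf (ν k) x) (itc f hf (ν k) y))
      Filter.atTop (𝓝 (dist x y)) := hdx.dist hdy
  refine le_of_tendsto hdist (Filter.eventually_atTop.2 ⟨j, fun k hk => ?_⟩)
  have hνk : j ≤ ν k := le_trans hk (hν k).1
  have : f^[ν k] x = f^[ν k - j] (f^[j] x) := by
    rw [← Function.iterate_add_apply]; congr 1; omega
  have hy' : f^[ν k] y = f^[ν k - j] (f^[j] y) := by
    rw [← Function.iterate_add_apply]; congr 1; omega
  calc dist (itc f hf (ν k) x) (itc f hf (ν k) y)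
      = dist (f^[ν k - j] (f^[j] x)) (f^[ν k - j] (f^[j] y)) := by
        simp only [itc_apply]; rw [this, hy']
    _ ≤ dist (f^[j] x) (f^[j] y) := by
        simpa using (lip_iterate f hf (ν k - j)).dist_le_mul (f^[j] x) (f^[j] y)

lemma comm_P (hf : LipschitzWith 1 f) {g g' : C(X, X)} (hg : g ∈ P f 1) (hg' : g' ∈ P f 1) :
    g.comp g' = g'.comp g := by
  have stepA : ∀ n : ℕ, ∀ u ∈ P f 1, u.comp (itc f hf n) = (itc f hf n).comp u := by
    intro n u hu
    have hclosed : IsClosed {v : C(X, X) | v.comp (itc f hf n) = (itc f hf n).comp v} :=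
      isClosed_eq (lip_comp_right (itc f hf n)).continuous
        (lip_comp_left (itc f hf n) (lip_iterate f hf n)).continuous
    have hsub : {v : C(X, X) | ∃ j : ℕ, 1 ≤ j ∧ ⇑v = f^[j]} ⊆
        {v : C(X, X) | v.comp (itc f hf n) = (itc f hf n).comp v} := by
      rintro v ⟨j, -, hvj⟩
      ext x
      show v (f^[n] x) = f^[n] (v x)
      rw [hvj, ← Function.iterate_add_apply, ← Function.iterate_add_apply, add_comm]
    exact closure_minimal hsub hclosed hu
  have hclosed : IsClosed {v : C(X, X) | v.comp g = g.comp v} :=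
    isClosed_eq (lip_comp_right g).continuous
      (lip_comp_left g (lip_of_mem_P f hf hg)).continuous
  have hsub : {v : C(X, X) | ∃ j : ℕ, 1 ≤ j ∧ ⇑v = f^[j]} ⊆
      {v : C(X, X) | v.comp g = g.comp v} := by
    rintro v ⟨j, hj, hvj⟩
    have hv : v = itc f hf j := ContinuousMap.coe_injective hvj
    rw [hv]
    exact (stepA j g hg).symm
  exact (closure_minimal hsub hclosed hg').symm

end

/-- For a 1-Lipschitz self-map `f` of a compact metric space `X`, there is a unique
idempotent in the closure (in `C(X, X)` with the compact-open topology) of the set of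
positive iterates of `f`, and its range is the eventual image `⋂ n, f^[n] '' univ`. -/
theorem unique_idempotent_in_closure_iterates (X : Type*) [MetricSpace X]
    [CompactSpace X] (f : X → X) (hf : LipschitzWith 1 f) :
    ∃ h : C(X, X),
      h ∈ closure {g : C(X, X) | ∃ n : ℕ, 1 ≤ n ∧ ⇑g = f^[n]} ∧
      ⇑h ∘ ⇑h = ⇑h ∧
      Set.range h = ⋂ n : ℕ, f^[n] '' Set.univ ∧
      ∀ h' : C(X, X), h' ∈ closure {g : C(X, X) | ∃ n : ℕ, 1 ≤ n ∧ ⇑g = f^[n]} →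
        ⇑h' ∘ ⇑h' = ⇑h' → h' = h := by
  obtain ⟨h, ν, hν, hlim, hΛid⟩ := exists_h f hf
  -- h belongs to every P f j
  have hmemP : ∀ j : ℕ, h ∈ P f j := by
    intro j
    refine mem_closure_of_tendsto hlim (Filter.eventually_atTop.2 ⟨j, fun k hk => ?_⟩)
    exact ⟨ν k, le_trans hk (hν k).1, rfl⟩
  have hmem : h ∈ closure {g : C(X, X) | ∃ n : ℕ, 1 ≤ n ∧ ⇑g = f^[n]} := hmemP 1
  -- range of h is contained in Λ
  have hrange : ∀ x, h x ∈ ⋂ n : ℕ, f^[n] '' Set.univ := by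
    intro x
    exact Set.mem_iInter.2 fun j => mem_image_of_mem_P f hf (hmemP j) x
  -- idempotent
  have hidem : ⇑h ∘ ⇑h = ⇑h := funext fun x => hΛid (h x) (hrange x)
  refine ⟨h, hmem, hidem, ?_, ?_⟩
  · ext x
    constructor
    · rintro ⟨y, rfl⟩; exact hrange y
    · intro hx; exact ⟨x, hΛid x hx⟩
  · intro h' hmem' hidem'
    have hcomp' : h'.comp h' = h' := ContinuousMap.coe_injective hidem'
    -- h' belongs to every P f (j+1)
    have h'memP : ∀ j : ℕ, h' ∈ P f (j + 1) := by
      intro j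
      induction j with
      | zero => exact hmem'
      | succ j ih =>
        have := comp_mem_P f hf ih hmem'
        rwa [hcomp'] at this
    have h'range : ∀ x, h' x ∈ ⋂ n : ℕ, f^[n] '' Set.univ := by
      intro x
      refine Set.mem_iInter.2 fun j => ?_
      obtain ⟨y, -, hy⟩ := mem_image_of_mem_P f hf (h'memP j) x
      exact ⟨f y, Set.mem_univ _, by rw [← hy, Function.iterate_succ_apply]⟩
    -- h' is isometric on Λ
    have h'iso : ∀ x ∈ ⋂ n : ℕ, f^[n] '' Set.univ, ∀ y ∈ ⋂ n : ℕ, f^[n] '' Set.univ,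
        dist (h' x) (h' y) = dist x y := by
      intro x hx y hy
      obtain ⟨u, hu, hul⟩ := mem_closure_iff_seq_limit.1 hmem'
      have hux : Filter.Tendsto (fun k => u k x) Filter.atTop (𝓝 (h' x)) :=
        ((continuous_eval_const x).tendsto h').comp hul
      have huy : Filter.Tendsto (fun k => u k y) Filter.atTop (𝓝 (h' y)) :=
        ((continuous_eval_const y).tendsto h').comp hul
      have hconst : ∀ k, dist (u k x) (u k y) = dist x y := by
        intro k
        obtain ⟨n, -, hun⟩ := hu k
        rw [hun]
        refine le_antisymm ?_ (iterate_isometry_s16 f hf hx hy n)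
        simpa using (lip_iterate f hf n).dist_le_mul x y
      have h1 : Filter.Tendsto (fun k => dist (u k x) (u k y)) Filter.atTop
          (𝓝 (dist (h' x) (h' y))) := hux.dist huy
      have h2 : Filter.Tendsto (fun k => dist (u k x) (u k y)) Filter.atTop
          (𝓝 (dist x y)) := by
        simp only [hconst]; exact tendsto_const_nhds
      exact tendsto_nhds_unique h1 h2
    -- h' is the identity on Λ
    have h'Λid : ∀ x ∈ ⋂ n : ℕ, f^[n] '' Set.univ, h' x = x := by
      intro x hx
      have := h'iso (h' x) (h'range x) x hx
      have h0 : h' (h' x) = h' x := congrFun hidem' x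
      rw [h0, dist_self] at this
      exact dist_eq_zero.1 this.symm
    -- conclude h' = h
    have hcomm := comm_P f hf hmem' hmem
    ext x
    have e1 : h' (h x) = h x := h'Λid (h x) (hrange x)
    have e2 : h' (h x) = h (h' x) := by
      have := DFunLike.congr_fun hcomm x
      simpa using this
    have e3 : h (h' x) = h' x := hΛid (h' x) (h'range x)
    rw [e2, e3] at e1
    exact e1
end

section
/- Let X be a compact metric space and f : X → X a 1-Lipschitz map. Then the set of recurrent points of f equals the eventual image of f: {x ∈ X | x ∈ closure {f^[n](x) | n ≥ 1}} = ⋂_{n ∈ ℕ} f^[n](X). In particular, the set of recurrent points is closed. -/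
open Set Metric Filter

/-- For a 1-Lipschitz self-map `f` of a compact metric space `X`, the set of recurrent
points of `f` equals the eventual image `⋂ n, f^[n] '' univ`; in particular, the set of
recurrent points is closed. -/
theorem recurrentPoints_eq_eventualImage (X : Type*) [MetricSpace X] [CompactSpace X]
    (f : X → X) (hf : LipschitzWith 1 f) :
    {x : X | x ∈ closure {y : X | ∃ n : ℕ, 1 ≤ n ∧ y = f^[n] x}}
        = ⋂ n : ℕ, f^[n] '' Set.univ ∧
      IsClosed {x : X | x ∈ closure {y : X | ∃ n : ℕ, 1 ≤ n ∧ y = f^[n] x}} := by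
  have hcont : Continuous f := hf.continuous
  have himcl : ∀ n : ℕ, IsClosed (f^[n] '' Set.univ) := fun n =>
    (isCompact_univ.image (hcont.iterate n)).isClosed
  have heq : {x : X | x ∈ closure {y : X | ∃ n : ℕ, 1 ≤ n ∧ y = f^[n] x}}
      = ⋂ n : ℕ, f^[n] '' Set.univ := by
    ext x
    simp only [mem_setOf_eq, mem_iInter]
    constructor
    · intro hx n
      set C : Set X := (f^[n] '' Set.univ) ∪ (⋃ k ∈ Finset.Ico 1 n, {f^[k] x}) with hC
      have hCclosed : IsClosed C :=
        (himcl n).union (Set.Finite.isClosed_biUnion (Finset.finite_toSet _)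
          (fun _ _ => isClosed_singleton))
      have hsub : {y : X | ∃ k : ℕ, 1 ≤ k ∧ y = f^[k] x} ⊆ C := by
        rintro y ⟨k, hk1, rfl⟩
        by_cases hkn : n ≤ k
        · exact Or.inl ⟨f^[k - n] x, mem_univ _, by
            rw [← Function.iterate_add_apply, Nat.add_sub_cancel' hkn]⟩
        · exact Or.inr (Set.mem_biUnion
            (Finset.mem_Ico.mpr ⟨hk1, lt_of_not_ge hkn⟩) rfl)
      have hxC : x ∈ C := by
        have := closure_mono hsub hx
        rwa [hCclosed.closure_eq] at this
      rcases hxC with h | h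
      · exact h
      · obtain ⟨k, hk, hxk⟩ := Set.mem_iUnion₂.mp h
        have hk1 : 1 ≤ k := (Finset.mem_Ico.mp hk).1
        have hfix : Function.IsFixedPt f^[k] x := (Set.mem_singleton_iff.mp hxk).symm
        have hkn : f^[k * n] x = x := by
          rw [Function.iterate_mul]
          exact hfix.iterate n
        have hnk : n ≤ k * n := Nat.le_mul_of_pos_left n hk1
        exact ⟨f^[k * n - n] x, mem_univ _, by
          rw [← Function.iterate_add_apply, Nat.add_sub_cancel' hnk, hkn]⟩
    · intro hx
      rw [Metric.mem_closure_iff]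
      intro ε hε
      have hy : ∀ m : ℕ, ∃ z : X, f^[m] z = x := by
        intro m
        obtain ⟨z, _, hz⟩ := hx m
        exact ⟨z, hz⟩
      choose y hy using hy
      obtain ⟨L, -, φ, hφ, hlim⟩ :=
        isCompact_univ.tendsto_subseq (fun m => mem_univ (y m))
      obtain ⟨N, hN⟩ := Metric.tendsto_atTop.mp hlim (ε / 2) (half_pos hε)
      set m := φ N
      set m' := φ (N + 1)
      have hmm : m < m' := hφ (Nat.lt_succ_self N)
      have hd : dist (y m') (y m) < ε := by
        calc dist (y m') (y m) ≤ dist (y m') L + dist (y m) L := dist_triangle_right _ _ _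
        _ < ε / 2 + ε / 2 := add_lt_add (hN (N + 1) (Nat.le_succ N)) (hN N le_rfl)
        _ = ε := add_halves ε
      refine ⟨f^[m' - m] x, ⟨m' - m, Nat.one_le_iff_ne_zero.mpr (Nat.sub_ne_zero_of_lt hmm), rfl⟩, ?_⟩
      have hfx : f^[m' - m] x = f^[m'] (y m) := by
        conv_lhs => rw [← hy m]
        rw [← Function.iterate_add_apply, Nat.sub_add_cancel hmm.le]
      calc dist x (f^[m' - m] x) = dist (f^[m'] (y m')) (f^[m'] (y m)) := by rw [hfx, hy m']
      _ ≤ 1 * dist (y m') (y m) := by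
          simpa using (hf.iterate m').dist_le_mul (y m') (y m)
      _ < ε := by rwa [one_mul]
  exact ⟨heq, heq ▸ isClosed_iInter himcl⟩
end

section
/- Let X be a compact metric space and f : X → X a 1-Lipschitz map. Then for every x ∈ X there is a unique point y in the eventual image ⋂_{n ∈ ℕ} f^[n](X) such that dist(f^[n](x), f^[n](y)) tends to 0 as n → ∞. -/
/-!
On the eventual image `E = ⋂ n, range f^[n]` the map `f` is a surjective 1-Lipschitz self-map of a
compact space, hence an isometry: a right inverse `g` of `f` on `E` is non-contracting, so every
pair of points returns simultaneously close to itself under `g`, which forbids `f` to shrink their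
distance. Uniqueness follows at once.

For existence, `y ↦ lim dist (f^[n] x) (f^[n] y)` is 1-Lipschitz, so it attains its minimum on `E`.
That minimum is `0`: the orbit of `x` comes arbitrarily close to a cluster point `z ∈ E`, and
`z = f^[n] w` for some `w ∈ E`.
-/

open Set Filter Function Topology

section NonContracting

variable {K : Type*} [PseudoMetricSpace K] {g : K → K}

theorem dist_le_dist_iterate_of_forall_dist_le (hg : ∀ a b, dist a b ≤ dist (g a) (g b))
    (n : ℕ) (a b : K) : dist a b ≤ dist (g^[n] a) (g^[n] b) := by
  induction n generalizing a b with
  | zero => exact le_rfl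
  | succ n ih => exact (hg a b).trans (ih (g a) (g b))

theorem exists_pos_iterate_dist_lt_of_forall_dist_le [CompactSpace K]
    (hg : ∀ a b, dist a b ≤ dist (g a) (g b)) (p : K) {ε : ℝ} (hε : 0 < ε) :
    ∃ m, 0 < m ∧ dist (g^[m] p) p < ε := by
  obtain ⟨_, -, φ, hφ, hconv⟩ := isCompact_univ.tendsto_subseq fun n => mem_univ (g^[n] p)
  obtain ⟨N, hN⟩ := Metric.cauchySeq_iff'.mp hconv.cauchySeq ε hε
  replace hN := hN (N + 1) N.le_succ
  have hlt : φ N < φ (N + 1) := hφ N.lt_succ_self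
  refine ⟨φ (N + 1) - φ N, Nat.sub_pos_of_lt hlt, ?_⟩
  calc dist (g^[φ (N + 1) - φ N] p) p
      ≤ dist (g^[φ N] (g^[φ (N + 1) - φ N] p)) (g^[φ N] p) :=
        dist_le_dist_iterate_of_forall_dist_le hg _ _ _
    _ = dist (g^[φ (N + 1)] p) (g^[φ N] p) := by
        rw [← iterate_add_apply, Nat.add_sub_cancel' hlt.le]
    _ < ε := hN

theorem LipschitzWith.isometry_of_surjective [CompactSpace K] {f : K → K}
    (hf : LipschitzWith 1 f) (hsurj : Surjective f) : Isometry f := by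
  have hf' : ∀ a b, dist (f a) (f b) ≤ dist a b := fun a b => by
    simpa using hf.dist_le_mul a b
  set g := surjInv hsurj
  have hfg : ∀ a, f (g a) = a := surjInv_eq hsurj
  have hg : ∀ a b, dist a b ≤ dist (g a) (g b) := fun a b => by
    simpa only [hfg] using hf' (g a) (g b)
  -- Working with `g × g` makes `a` and `b` return close to themselves at the same time.
  have hgg : ∀ p q : K × K, dist p q ≤ dist (Prod.map g g p) (Prod.map g g q) := fun p q =>
    max_le_max (hg _ _) (hg _ _)
  refine Isometry.of_dist_eq fun a b => (hf' a b).antisymm ?_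
  refine le_of_forall_pos_le_add fun ε hε => ?_
  obtain ⟨m, hm, hret⟩ := exists_pos_iterate_dist_lt_of_forall_dist_le hgg (a, b) (half_pos hε)
  simp only [Prod.map_iterate, Prod.dist_eq, Prod.map_fst, Prod.map_snd, max_lt_iff] at hret
  obtain ⟨k, rfl⟩ := Nat.exists_eq_succ_of_ne_zero hm.ne'
  calc dist a b ≤ dist (g^[k] a) (g^[k] b) := dist_le_dist_iterate_of_forall_dist_le hg k a b
    _ = dist (f (g^[k + 1] a)) (f (g^[k + 1] b)) := by simp only [iterate_succ_apply', hfg]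
    _ ≤ dist (f (g^[k + 1] a)) (f a) + dist (f a) (f b) + dist (f b) (f (g^[k + 1] b)) :=
        dist_triangle4 _ _ _ _
    _ ≤ ε / 2 + dist (f a) (f b) + ε / 2 := by
        rw [dist_comm (f b)]
        gcongr
        · exact (hf' _ _).trans hret.1.le
        · exact (hf' _ _).trans hret.2.le
    _ = dist (f a) (f b) + ε := by ring

end NonContracting

section EventualImage

variable {X : Type*} (f : X → X)

def eventualImage : Set X := ⋂ n : ℕ, range f^[n]

theorem range_iterate_succ_subset (n : ℕ) : range f^[n + 1] ⊆ range f^[n] := by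
  rw [iterate_succ]
  exact range_comp_subset_range f f^[n]

theorem mapsTo_eventualImage : MapsTo f (eventualImage f) (eventualImage f) := fun _ hy =>
  mem_iInter.2 fun n => by
    obtain ⟨u, rfl⟩ := mem_iInter.1 hy n
    exact ⟨f u, (Commute.iterate_self f n).eq u⟩

variable [TopologicalSpace X] [CompactSpace X] [T2Space X] {f}

theorem isClosed_range_iterate (hf : Continuous f) (n : ℕ) : IsClosed (range f^[n]) :=
  (isCompact_range (hf.iterate n)).isClosed

theorem isCompact_eventualImage (hf : Continuous f) : IsCompact (eventualImage f) :=
  (isClosed_iInter (isClosed_range_iterate hf)).isCompact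

theorem surjOn_eventualImage (hf : Continuous f) :
    SurjOn f (eventualImage f) (eventualImage f) := by
  intro z hz
  have hfiber : (⋂ n, range f^[n] ∩ f ⁻¹' {z}).Nonempty := by
    refine IsCompact.nonempty_iInter_of_sequence_nonempty_isCompact_isClosed _
      (fun n => inter_subset_inter_left _ (range_iterate_succ_subset f n)) (fun n => ?_)
      ((isClosed_range_iterate hf 0).isCompact.inter_right (isClosed_singleton.preimage hf))
      (fun n => (isClosed_range_iterate hf n).inter (isClosed_singleton.preimage hf))
    obtain ⟨u, hu⟩ := mem_iInter.1 hz (n + 1)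
    exact ⟨f^[n] u, mem_range_self u, by simp [← hu, iterate_succ_apply']⟩
  obtain ⟨w, hw⟩ := hfiber
  rw [mem_iInter] at hw
  exact ⟨w, mem_iInter.2 fun n => (hw n).1, (hw 0).2⟩

theorem mem_eventualImage_of_mapClusterPt (hf : Continuous f) {x z : X}
    (h : MapClusterPt z atTop fun n => f^[n] x) : z ∈ eventualImage f :=
  mem_iInter.2 fun m => (isClosed_range_iterate hf m).mem_of_mapClusterPt h <|
    eventually_atTop.2 ⟨m, fun n hn => ⟨f^[n - m] x, by rw [← iterate_add_apply, Nat.add_sub_cancel' hn]⟩⟩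

end EventualImage

section Lipschitz

variable {X : Type*} [PseudoMetricSpace X] {f : X → X}

theorem LipschitzWith.dist_iterate_le_s18 (hf : LipschitzWith 1 f) (n : ℕ) (a b : X) :
    dist (f^[n] a) (f^[n] b) ≤ dist a b := by
  simpa using (hf.iterate n).dist_le_mul a b

theorem LipschitzWith.antitone_dist_iterate (hf : LipschitzWith 1 f) (x y : X) :
    Antitone fun n => dist (f^[n] x) (f^[n] y) :=
  antitone_nat_of_succ_le fun n => by
    simpa only [iterate_succ_apply', iterate_zero_apply] using hf.dist_iterate_le_s18 1 (f^[n] x) (f^[n] y)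

variable (f) in
noncomputable def asymptoticDist (x y : X) : ℝ := ⨅ n : ℕ, dist (f^[n] x) (f^[n] y)

theorem bddBelow_range_dist_iterate (x y : X) :
    BddBelow (range fun n => dist (f^[n] x) (f^[n] y)) :=
  ⟨0, forall_mem_range.2 fun _ => dist_nonneg⟩

theorem asymptoticDist_le_dist_iterate (x y : X) (n : ℕ) :
    asymptoticDist f x y ≤ dist (f^[n] x) (f^[n] y) :=
  ciInf_le (bddBelow_range_dist_iterate x y) n

theorem LipschitzWith.tendsto_dist_iterate_asymptoticDist (hf : LipschitzWith 1 f) (x y : X) :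
    Tendsto (fun n => dist (f^[n] x) (f^[n] y)) atTop (𝓝 (asymptoticDist f x y)) :=
  tendsto_atTop_ciInf (hf.antitone_dist_iterate x y) (bddBelow_range_dist_iterate x y)

theorem LipschitzWith.lipschitzWith_asymptoticDist (hf : LipschitzWith 1 f) (x : X) :
    LipschitzWith 1 (asymptoticDist f x) := by
  refine LipschitzWith.of_le_add fun y y' => sub_le_iff_le_add.1 <| le_ciInf fun n => ?_
  calc asymptoticDist f x y - dist y y'
      ≤ dist (f^[n] x) (f^[n] y) - dist (f^[n] y') (f^[n] y) := by
        rw [dist_comm y]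
        gcongr
        exacts [asymptoticDist_le_dist_iterate x y n, hf.dist_iterate_le_s18 n y' y]
    _ ≤ dist (f^[n] x) (f^[n] y') := by linarith [dist_triangle (f^[n] x) (f^[n] y') (f^[n] y)]

end Lipschitz

section CompactLipschitz

variable {X : Type*} [MetricSpace X] [CompactSpace X] {f : X → X}

theorem LipschitzWith.dist_eq_of_mem_eventualImage (hf : LipschitzWith 1 f) {a b : X}
    (ha : a ∈ eventualImage f) (hb : b ∈ eventualImage f) : dist (f a) (f b) = dist a b := by
  have : CompactSpace (eventualImage f) :=
    isCompact_iff_compactSpace.mp (isCompact_eventualImage hf.continuous)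
  have hmaps := mapsTo_eventualImage f
  have hiso : Isometry hmaps.restrict :=
    LipschitzWith.isometry_of_surjective (f := hmaps.restrict)
      (LipschitzWith.of_dist_le_mul fun a b => hf.dist_le_mul a b)
      (hmaps.restrict_surjective_iff.2 (surjOn_eventualImage hf.continuous))
  exact hiso.dist_eq ⟨a, ha⟩ ⟨b, hb⟩

theorem LipschitzWith.dist_iterate_eq_of_mem_eventualImage (hf : LipschitzWith 1 f) {a b : X}
    (ha : a ∈ eventualImage f) (hb : b ∈ eventualImage f) (n : ℕ) :
    dist (f^[n] a) (f^[n] b) = dist a b := by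
  induction n with
  | zero => rfl
  | succ n ih =>
    rw [iterate_succ_apply', iterate_succ_apply', hf.dist_eq_of_mem_eventualImage
      ((mapsTo_eventualImage f).iterate n ha) ((mapsTo_eventualImage f).iterate n hb), ih]

theorem LipschitzWith.exists_mem_eventualImage_tendsto_dist (hf : LipschitzWith 1 f) (x : X) :
    ∃ y ∈ eventualImage f, Tendsto (fun n => dist (f^[n] x) (f^[n] y)) atTop (𝓝 0) := by
  obtain ⟨z, hz⟩ := exists_clusterPt_of_compactSpace (map (fun n => f^[n] x) atTop)
  have hzE : z ∈ eventualImage f := mem_eventualImage_of_mapClusterPt hf.continuous hz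
  obtain ⟨y, hyE, hmin⟩ := (isCompact_eventualImage hf.continuous).exists_isMinOn ⟨z, hzE⟩
    (hf.lipschitzWith_asymptoticDist x).continuous.continuousOn
  have hy : asymptoticDist f x y = 0 := by
    refine (le_of_forall_pos_le_add fun ε hε => ?_).antisymm (le_ciInf fun _ => dist_nonneg)
    obtain ⟨n, hn⟩ := (MapClusterPt.frequently hz (Metric.ball_mem_nhds z hε)).exists
    obtain ⟨w, hwE, rfl⟩ := (surjOn_eventualImage hf.continuous).iterate n hzE
    calc asymptoticDist f x y ≤ asymptoticDist f x w := hmin hwE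
      _ ≤ dist (f^[n] x) (f^[n] w) := asymptoticDist_le_dist_iterate x w n
      _ ≤ 0 + ε := by rw [zero_add]; exact hn.le
  exact ⟨y, hyE, hy ▸ hf.tendsto_dist_iterate_asymptoticDist x y⟩

theorem LipschitzWith.eq_of_tendsto_dist_iterate (hf : LipschitzWith 1 f) {x y y' : X}
    (hyE : y ∈ eventualImage f) (hy'E : y' ∈ eventualImage f)
    (hy : Tendsto (fun n => dist (f^[n] x) (f^[n] y)) atTop (𝓝 0))
    (hy' : Tendsto (fun n => dist (f^[n] x) (f^[n] y')) atTop (𝓝 0)) : y = y' := by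
  have hyy' : Tendsto (fun n => dist (f^[n] y) (f^[n] y')) atTop (𝓝 0) :=
    squeeze_zero (fun _ => dist_nonneg) (fun _ => dist_triangle_left _ _ _)
      (by simpa using hy.add hy')
  simp only [hf.dist_iterate_eq_of_mem_eventualImage hyE hy'E] at hyy'
  exact dist_eq_zero.1 (tendsto_const_nhds_iff.1 hyy')

end CompactLipschitz

/-- For a 1-Lipschitz self-map `f` of a compact metric space `X` and any `x ∈ X`, there
is a unique point `y` of the eventual image `⋂ n, f^[n] '' univ` such that
`dist (f^[n] x) (f^[n] y) → 0` as `n → ∞`. -/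
theorem exists_unique_asymptotic_point (X : Type*) [MetricSpace X] [CompactSpace X]
    (f : X → X) (hf : LipschitzWith 1 f) (x : X) :
    ∃! y : X, y ∈ (⋂ n : ℕ, f^[n] '' Set.univ) ∧
      Filter.Tendsto (fun n : ℕ => dist (f^[n] x) (f^[n] y)) Filter.atTop (nhds 0) := by
  simp only [image_univ]
  obtain ⟨y, hyE, hy⟩ := hf.exists_mem_eventualImage_tendsto_dist x
  exact ⟨y, ⟨hyE, hy⟩, fun y' ⟨hy'E, hy'⟩ => hf.eq_of_tendsto_dist_iterate hy'E hyE hy' hy⟩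
end
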